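/- arXiv:2506.03851 — 12 statements merged into one kernel-verified Lean document; each statement's English description precedes it below -/
import Mathlib

section
/- Let A be a commutative ring and B a commutative A-algebra that is free of finite rank n as an A-module. Then the B-module of Kähler differentials Ω_{B/A} is finitely presented, and for every element b of its 0th Fitting ideal F₀(Ω_{B/A}) (an ideal of B), the discriminant Disc(B/A) of any A-basis of B divides the norm N_{B/A}(b) in A. -/
/-!
Let `I` be the kernel of the multiplication map `μ : B ⊗[A] B → B`, so that `Ω[B⁄A] = I / I²`.
Given `N` generators of `Ω[B⁄A]` and an `N × N` matrix `P` of relations among them, lift the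
generators to `x : Fin N → I`. By Nakayama there is `η ≡ 1 mod I` with `η I ⊆ (x)`; then each
`η (P x)ᵢ` lies in `I (x)`, so `η P` can be corrected by a matrix with entries in `I` to a matrix
`Q` with `Q x = 0`. By Cramer, `δ = det Q · η` kills `I`, and `μ δ = det P`. Hence the Fitting
ideal lies in `μ (Ann I)`.

For `δ = ∑ cₖ ⊗ εₖ` killing `I`, the identity `(y ⊗ 1) δ = (1 ⊗ y) δ` gives
`μ δ · x = ∑ₖ cₖ Tr (εₖ x)`, so the matrix of multiplication by `μ δ` is the matrix of
coordinates of the `cₖ` times the trace matrix; taking determinants, `Disc ε ∣ N (μ δ)`.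
-/

open TensorProduct

/-- The 0-th Fitting ideal of a module `M` over `R`: for a finitely presented module it is
the ideal generated by the `n × n` minors of a relation matrix of any presentation of `M`
with `n` generators; equivalently (by Fitting's lemma, which guarantees independence of the
presentation) the ideal generated by the determinants of all `n × n` matrices whose rows are
relations among the `n` generators.  We take the supremum over all finite presentations. -/
noncomputable def fittingIdeal0 (R M : Type*) [CommRing R] [AddCommGroup M] [Module R M] :
    Ideal R :=
  ⨆ (n : ℕ) (f : (Fin n → R) →ₗ[R] M) (_ : Function.Surjective f),
    Ideal.span { d : R | ∃ P : Matrix (Fin n) (Fin n) R,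
      (∀ i, P i ∈ LinearMap.ker f) ∧ d = P.det }

open Matrix

theorem Matrix.det_smul_eq_zero_of_mulVec_eq_zero {R n : Type*} [CommRing R] [Fintype n]
    [DecidableEq n] {Q : Matrix n n R} {v : n → R} (h : Q *ᵥ v = 0) : Q.det • v = 0 := by
  rw [← Matrix.one_mulVec v, ← Matrix.smul_mulVec, ← Matrix.adjugate_mul, ← Matrix.mulVec_mulVec,
    h, Matrix.mulVec_zero]

namespace Ideal

variable {S : Type*} [CommRing S] {I J : Ideal S}

theorem exists_sub_one_mem_and_mul_mem_of_le_sup_sq (hI : I.FG) (hIJ : I ≤ J ⊔ I ^ 2) :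
    ∃ η : S, η - 1 ∈ I ∧ ∀ z ∈ I, η * z ∈ J := by
  have hle : Submodule.map J.mkQ I ≤ I • Submodule.map J.mkQ I := by
    rw [← Submodule.map_smul'', smul_eq_mul, ← pow_two]
    calc Submodule.map J.mkQ I ≤ Submodule.map J.mkQ (J ⊔ I ^ 2) := Submodule.map_mono hIJ
      _ = Submodule.map J.mkQ (I ^ 2) := by
        rw [Submodule.map_sup, Submodule.mkQ_map_self, bot_sup_eq]
  obtain ⟨η, hη1, hη⟩ :=
    Submodule.exists_sub_one_mem_and_smul_eq_zero_of_fg_of_le_smul I _ (Submodule.FG.map _ hI) hle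
  refine ⟨η, hη1, fun z hz => ?_⟩
  have := hη _ ⟨z, hz, rfl⟩
  rwa [← map_smul, Submodule.mkQ_apply, Submodule.Quotient.mk_eq_zero, smul_eq_mul] at this

theorem exists_forall_mul_eq_zero_and_sub_det_mem {ι : Type*} [Fintype ι] [DecidableEq ι]
    (hI : I.FG) {x : ι → S} (hgen : I ≤ span (Set.range x) ⊔ I ^ 2) (P : Matrix ι ι S)
    (hP : ∀ i, (P *ᵥ x) i ∈ I ^ 2) :
    ∃ δ : S, (∀ z ∈ I, δ * z = 0) ∧ δ - P.det ∈ I := by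
  obtain ⟨η, hη1, hηI⟩ := exists_sub_one_mem_and_mul_mem_of_le_sup_sq hI hgen
  have hrel : ∀ i, η * (P *ᵥ x) i ∈ I • Submodule.span S (Set.range x) := by
    intro i
    have hmem : η * (P *ᵥ x) i ∈ span {η} * (I * I) :=
      mul_mem_mul (mem_span_singleton_self η) (pow_two I ▸ hP i)
    rw [mul_left_comm] at hmem
    exact mul_mono_right (span_singleton_mul_le_iff.mpr hηI) hmem
  choose g hgI hg using fun i => (Submodule.mem_ideal_smul_span_iff_exists_sum I x _).mp (hrel i)
  set Q : Matrix ι ι S := η • P - Matrix.of fun i j => g i j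
  have hQ : Q *ᵥ x = 0 := by
    funext i
    rw [Matrix.sub_mulVec, Matrix.smul_mulVec, Pi.sub_apply, Pi.smul_apply, smul_eq_mul, ← hg i,
      Finsupp.sum_fintype _ _ fun j => zero_smul S (x j), Pi.zero_apply, sub_eq_zero]
    rfl
  refine ⟨Q.det * η, fun z hz => ?_, ?_⟩
  · have hQann : Q.det ∈ (span (Set.range x)).annihilator := by
      rw [Submodule.mem_annihilator_span]
      rintro ⟨_, j, rfl⟩
      exact congrFun (Matrix.det_smul_eq_zero_of_mulVec_eq_zero hQ) j
    rw [mul_assoc]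
    exact Submodule.mem_annihilator.mp hQann _ (hηI z hz)
  · have hη : Ideal.Quotient.mk I η = 1 := Ideal.Quotient.eq.mpr hη1
    rw [← Ideal.Quotient.eq, map_mul, hη, mul_one, RingHom.map_det, RingHom.map_det]
    congr 1
    ext i j
    simp [Q, hη, Ideal.Quotient.eq_zero_iff_mem.mpr (hgI i j)]

end Ideal

namespace KaehlerDifferential

variable {A B : Type*} [CommRing A] [CommRing B] [Algebra A B]

theorem exists_le_span_sup_sq_of_surjective {N : ℕ} {f : (Fin N → B) →ₗ[B] Ω[B⁄A]}
    (hf : Function.Surjective f) :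
    ∃ x : Fin N → B ⊗[A] B, ideal A B ≤ Ideal.span (Set.range x) ⊔ ideal A B ^ 2 ∧
      ∀ v ∈ LinearMap.ker f, ∑ j, algebraMap B (B ⊗[A] B) (v j) * x j ∈ ideal A B ^ 2 := by
  choose x hx using fun j => fromIdeal_surjective A B (f (Pi.basisFun B (Fin N) j))
  have hcot : ∀ v : Fin N → B,
      fromIdeal A B (∑ j, algebraMap B (B ⊗[A] B) (v j) • x j) = f v := by
    intro v
    conv_rhs => rw [← (Pi.basisFun B (Fin N)).sum_repr v]
    rw [map_sum, map_sum]
    refine Finset.sum_congr rfl fun j _ => ?_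
    rw [LinearMap.map_smul, hx, algebraMap_smul, LinearMap.map_smul, Pi.basisFun_repr]
  refine ⟨fun j => x j, fun z hz => ?_, fun v hv => ?_⟩
  · obtain ⟨v, hv⟩ := hf (fromIdeal A B ⟨z, hz⟩)
    set u : ideal A B := ∑ j, algebraMap B (B ⊗[A] B) (v j) • x j
    have hzu : z - u ∈ ideal A B ^ 2 := (Ideal.toCotangent_eq _).mp ((hcot v).trans hv).symm
    have hu : (u : B ⊗[A] B) ∈ Ideal.span (Set.range fun j => (x j : B ⊗[A] B)) := by
      rw [Submodule.coe_sum]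
      exact Ideal.sum_mem _ fun j _ => Ideal.mul_mem_left _ _ (Ideal.subset_span ⟨j, rfl⟩)
    rw [← add_sub_cancel (u : B ⊗[A] B) z]
    exact Submodule.add_mem_sup hu hzu
  · simpa using (Ideal.toCotangent_eq_zero _ _).mp ((hcot v).trans hv)

theorem fittingIdeal0_le_map_annihilator [Algebra.EssFiniteType A B] :
    fittingIdeal0 B (Ω[B⁄A]) ≤
      (ideal A B).annihilator.map (Algebra.TensorProduct.lmul' A : B ⊗[A] B →ₐ[A] B) := by
  refine iSup_le fun N => iSup_le fun f => iSup_le fun hf => ?_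
  rw [Ideal.span_le]
  rintro _ ⟨P, hP, rfl⟩
  obtain ⟨x, hgen, hrel⟩ := exists_le_span_sup_sq_of_surjective hf
  obtain ⟨δ, hδ, hδP⟩ := Ideal.exists_forall_mul_eq_zero_and_sub_det_mem (ideal_fg A B) hgen
    ((algebraMap B (B ⊗[A] B)).mapMatrix P) fun i => hrel (P i) (hP i)
  rw [← RingHom.map_det, RingHom.mem_ker, map_sub, sub_eq_zero] at hδP
  have hμδ : Algebra.TensorProduct.lmul' A δ = P.det := by simpa using hδP
  exact hμδ ▸ Ideal.mem_map_of_mem _ (Submodule.mem_annihilator.mpr hδ)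

variable {ι : Type*} [Fintype ι] (ε : Module.Basis ι A B) {δ : B ⊗[A] B}

theorem mul_baseChange_repr_of_mem_annihilator (hδ : δ ∈ (ideal A B).annihilator) (y : B) (i : ι) :
    y * (ε.baseChange B).repr δ i =
      ∑ k, (ε.baseChange B).repr δ k * algebraMap A B (ε.repr (ε k * y) i) := by
  have hsymm : δ * ((1 : B) ⊗ₜ[A] y) = y • δ := by
    have h := Submodule.mem_annihilator.mp hδ _ (one_smul_sub_smul_one_mem_ideal A y)
    rw [smul_eq_mul, mul_sub, sub_eq_zero] at h
    rw [h, Algebra.smul_def, mul_comm]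
    rfl
  have hexpand : δ * ((1 : B) ⊗ₜ[A] y) =
      ∑ k, (ε.baseChange B).repr δ k • ((1 : B) ⊗ₜ[A] (ε k * y)) := by
    conv_lhs => rw [← (ε.baseChange B).sum_repr δ]
    rw [Finset.sum_mul]
    refine Finset.sum_congr rfl fun k _ => ?_
    rw [smul_mul_assoc, Module.Basis.baseChange_apply, Algebra.TensorProduct.tmul_mul_tmul, one_mul]
  have := congrArg (fun t => (ε.baseChange B).repr t i) (hsymm.symm.trans hexpand)
  simpa [Finsupp.finsetSum_apply, mul_comm, Algebra.algebraMap_eq_smul_one] using this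

theorem lmul'_mul_eq_sum_trace_of_mem_annihilator (hδ : δ ∈ (ideal A B).annihilator) (x : B) :
    Algebra.TensorProduct.lmul' A δ * x =
      ∑ k, (ε.baseChange B).repr δ k * algebraMap A B (Algebra.trace A B (ε k * x)) := by
  classical
  set c := (ε.baseChange B).repr δ
  have hδ_sum : Algebra.TensorProduct.lmul' A δ = ∑ i, c i * ε i := by
    conv_lhs => rw [← (ε.baseChange B).sum_repr δ]
    simp [c, Algebra.TensorProduct.lmul'_apply_tmul, TensorProduct.smul_tmul']
  calc Algebra.TensorProduct.lmul' A δ * x = ∑ i, (ε i * x) * c i := by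
        rw [hδ_sum, Finset.sum_mul]
        exact Finset.sum_congr rfl fun i _ => by ring
    _ = ∑ i, ∑ k, c k * algebraMap A B (ε.repr (ε k * (ε i * x)) i) :=
        Finset.sum_congr rfl fun i _ => mul_baseChange_repr_of_mem_annihilator ε hδ _ i
    _ = _ := by
        rw [Finset.sum_comm]
        refine Finset.sum_congr rfl fun k _ => ?_
        rw [← Finset.mul_sum, ← map_sum, Algebra.trace_eq_matrix_trace ε, Matrix.trace]
        congr 2
        refine Finset.sum_congr rfl fun i _ => ?_
        rw [Matrix.diag_apply, Algebra.leftMulMatrix_eq_repr_mul, mul_left_comm, mul_comm (ε k * x)]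

theorem leftMulMatrix_lmul'_of_mem_annihilator [DecidableEq ι]
    (hδ : δ ∈ (ideal A B).annihilator) :
    Algebra.leftMulMatrix ε (Algebra.TensorProduct.lmul' A δ) =
      Matrix.of (fun i k => ε.repr ((ε.baseChange B).repr δ k) i) * Algebra.traceMatrix A ε := by
  ext i j
  rw [Algebra.leftMulMatrix_eq_repr_mul, lmul'_mul_eq_sum_trace_of_mem_annihilator ε hδ, map_sum,
    Finsupp.finsetSum_apply, Matrix.mul_apply]
  refine Finset.sum_congr rfl fun k _ => ?_
  rw [mul_comm, ← Algebra.smul_def, map_smul, Finsupp.smul_apply, smul_eq_mul, mul_comm,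
    Algebra.traceMatrix_apply, Algebra.traceForm_apply, Matrix.of_apply]

theorem discr_dvd_norm_lmul'_of_mem_annihilator [DecidableEq ι] (hδ : δ ∈ (ideal A B).annihilator) :
    Algebra.discr A ε ∣ Algebra.norm A (Algebra.TensorProduct.lmul' A δ) := by
  rw [Algebra.norm_eq_matrix_det ε, leftMulMatrix_lmul'_of_mem_annihilator ε hδ, Matrix.det_mul,
    Algebra.discr_def]
  exact dvd_mul_left _ _

end KaehlerDifferential

/-- Let `B` be a commutative `A`-algebra that is free of finite rank `n` as an
`A`-module.  Then the `B`-module of Kähler differentials `Ω[B⁄A]` is finitely presented, and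
for every element `b` of its 0-th Fitting ideal, the discriminant of any `A`-basis of `B`
divides the norm `N_{B/A}(b)` in `A`. -/
theorem free_algebra_discr_dvd_norm_of_mem_fittingIdeal
    (A B : Type*) [CommRing A] [CommRing B] [Algebra A B]
    (n : ℕ) (ε : Module.Basis (Fin n) A B) :
    Module.FinitePresentation B (Ω[B⁄A]) ∧
      ∀ b ∈ fittingIdeal0 B (Ω[B⁄A]), Algebra.discr A ε ∣ Algebra.norm A b := by
  have := Module.Finite.of_basis ε
  have := Module.Free.of_basis ε
  have := Module.finitePresentation_of_projective A B
  refine ⟨inferInstance, fun b hb => ?_⟩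
  have hsurj : Function.Surjective (Algebra.TensorProduct.lmul' A : B ⊗[A] B →ₐ[A] B) :=
    fun b => ⟨b ⊗ₜ 1, by simp⟩
  obtain ⟨δ, hδ, rfl⟩ := (Ideal.mem_map_iff_of_surjective _ hsurj).mp
    (KaehlerDifferential.fittingIdeal0_le_map_annihilator hb)
  exact KaehlerDifferential.discr_dvd_norm_lmul'_of_mem_annihilator ε hδ
end

section
/- Let A be a commutative ring and B a commutative A-algebra that is free of finite rank n as an A-module. If the module of Kähler differentials Ω_{B/A} is zero, then the discriminant Disc(B/A) of any A-basis of B is a unit of A. -/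
/-!
Since `Ω[B⁄A] = 0`, `B` is formally unramified over `A`, so `B ⊗[A] B` contains a separability
idempotent `e = ∑ₖ xₖ ⊗ yₖ`: `∑ₖ xₖ yₖ = 1` and `(b ⊗ 1) e = (1 ⊗ b) e` for all `b`.
Writing `Tr c = ∑ᵢ εᵢ*(c εᵢ)` and moving `c εᵢ` across the tensor sign gives
`∑ₖ Tr (c xₖ) yₖ = c` for every `c`, so the matrix `(∑ₖ εᵢ*(xₖ) εⱼ*(yₖ))ᵢⱼ` is a right inverse
of the trace matrix `(Tr (εᵢ εⱼ))ᵢⱼ`.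
-/

open TensorProduct

section

variable {A B : Type*} [CommRing A] [CommRing B] [Algebra A B]

noncomputable def contractFst (f : Module.Dual A B) : B ⊗[A] B →ₗ[A] B :=
  TensorProduct.lid A B ∘ₗ LinearMap.rTensor B f

@[simp]
lemma contractFst_tmul (f : Module.Dual A B) (x y : B) :
    contractFst f (x ⊗ₜ y) = f x • y := rfl

lemma contractFst_one_tmul_mul (f : Module.Dual A B) (c : B) (z : B ⊗[A] B) :
    contractFst f ((1 ⊗ₜ c) * z) = c * contractFst f z := by
  induction z using TensorProduct.induction_on with
  | zero => simp
  | tmul x y => simp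
  | add z w hz hw => simp [mul_add, hz, hw]

variable {ι : Type*} [Fintype ι] (ε : Module.Basis ι A B)

lemma sum_basis_mul_contractFst_coord (z : B ⊗[A] B) :
    ∑ i, ε i * contractFst (ε.coord i) z = Algebra.TensorProduct.lmul' A z := by
  induction z using TensorProduct.induction_on with
  | zero => simp
  | tmul x y =>
    simp only [contractFst_tmul, mul_smul_comm, ← smul_mul_assoc, ← Finset.sum_mul]
    simp [ε.sum_repr]
  | add z w hz hw => simp [mul_add, Finset.sum_add_distrib, hz, hw]

lemma contractFst_eq_sum_smul_contractFst_coord (f : Module.Dual A B) (z : B ⊗[A] B) :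
    contractFst f z = ∑ i, f (ε i) • contractFst (ε.coord i) z := by
  induction z using TensorProduct.induction_on with
  | zero => simp
  | tmul x y =>
    conv_lhs => rw [← ε.sum_repr x]
    simp only [contractFst_tmul, map_sum, map_smul, smul_eq_mul, Finset.sum_smul, smul_smul,
      ε.coord_apply, mul_comm]
  | add z w hz hw => simp [Finset.sum_add_distrib, hz, hw]

lemma Algebra.trace_eq_sum_coord_mul_basis (c : B) :
    Algebra.trace A B c = ∑ i, ε.coord i (c * ε i) := by
  classical
  rw [Algebra.trace_eq_matrix_trace ε, Matrix.trace]
  simp [Algebra.leftMulMatrix_eq_repr_mul]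

lemma contractFst_trace_mulLeft_eq_sum (c : B) (z : B ⊗[A] B) :
    contractFst (Algebra.trace A B ∘ₗ LinearMap.mulLeft A c) z =
      ∑ i, contractFst (ε.coord i) ((c * ε i) ⊗ₜ 1 * z) := by
  induction z using TensorProduct.induction_on with
  | zero => simp
  | tmul x y => simp [Algebra.trace_eq_sum_coord_mul_basis ε, Finset.sum_smul, mul_right_comm]
  | add z w hz hw => simp [mul_add, Finset.sum_add_distrib, hz, hw]

lemma contractFst_trace_mulLeft_eq_self [Module.Free A B] [Module.Finite A B]
    (e : B ⊗[A] B)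
    (he : ∀ b : B, ((1 : B) ⊗ₜ[A] b - b ⊗ₜ[A] (1 : B)) * e = 0)
    (he₁ : Algebra.TensorProduct.lmul' A e = 1) (c : B) :
    contractFst (Algebra.trace A B ∘ₗ LinearMap.mulLeft A c) e = c := by
  have hswap (b : B) : b ⊗ₜ[A] (1 : B) * e = (1 : B) ⊗ₜ[A] b * e := by
    rw [eq_comm, ← sub_eq_zero, ← sub_mul, he]
  let ε := Module.Free.chooseBasis A B
  calc contractFst (Algebra.trace A B ∘ₗ LinearMap.mulLeft A c) e
      = ∑ i, contractFst (ε.coord i) ((c * ε i) ⊗ₜ 1 * e) := contractFst_trace_mulLeft_eq_sum ε c e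
    _ = ∑ i, c * (ε i * contractFst (ε.coord i) e) := by
        simp only [hswap, contractFst_one_tmul_mul, mul_assoc]
    _ = c := by rw [← Finset.mul_sum, sum_basis_mul_contractFst_coord, he₁, mul_one]

lemma isUnit_discr_of_contractFst_trace_mulLeft_eq_self [DecidableEq ι] (e : B ⊗[A] B)
    (he : ∀ c : B, contractFst (Algebra.trace A B ∘ₗ LinearMap.mulLeft A c) e = c) :
    IsUnit (Algebra.discr A ε) := by
  let N : Matrix ι ι A := fun i j ↦ ε.coord j (contractFst (ε.coord i) e)
  refine Matrix.isUnit_det_of_right_inverse (B := N) (Matrix.ext fun l j ↦ ?_)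
  calc (Algebra.traceMatrix A ε * N) l j
      = ε.coord j (∑ i, Algebra.trace A B (ε l * ε i) • contractFst (ε.coord i) e) := by
        rw [Matrix.mul_apply]
        simp [N, Algebra.traceMatrix_apply, map_sum]
    _ = ε.coord j (contractFst (Algebra.trace A B ∘ₗ LinearMap.mulLeft A (ε l)) e) := by
        rw [contractFst_eq_sum_smul_contractFst_coord ε]
        rfl
    _ = ε.coord j (ε l) := by rw [he]
    _ = (1 : Matrix ι ι A) l j := by simp [Matrix.one_apply, Finsupp.single_apply]

end

/-- If `B` is a commutative `A`-algebra that is free of finite rank `n`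
as an `A`-module and the module of Kähler differentials `Ω[B⁄A]` vanishes, then the
discriminant of any `A`-basis of `B` is a unit of `A`. -/
theorem free_algebra_omega_eq_zero_discr_isUnit
    (A B : Type*) [CommRing A] [CommRing B] [Algebra A B]
    (n : ℕ) (ε : Module.Basis (Fin n) A B)
    (h : (⊤ : Submodule B (Ω[B⁄A])) = ⊥) :
    IsUnit (Algebra.discr A ε) := by
  have := Module.Free.of_basis ε
  have := Module.Finite.of_basis ε
  have : Subsingleton (Ω[B⁄A]) :=
    (Submodule.subsingleton_iff B).mp (subsingleton_of_bot_eq_top h.symm)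
  obtain ⟨e, he, he₁⟩ := Algebra.FormallyUnramified.iff_exists_tensorProduct.mp ⟨this⟩
  exact isUnit_discr_of_contractFst_trace_mulLeft_eq_self ε e
    (contractFst_trace_mulLeft_eq_self e he he₁)
end

section
/- Let A be a commutative ring and B a finitely presented commutative A-algebra. Let μ: B ⊗_A B → B be the multiplication map and J = ker μ. Then the 0th Fitting ideal of the B-module of Kähler differentials satisfies the inclusion F₀(Ω_{B/A}) ⊆ μ(Ann(J)) as ideals of B. -/
/-!
`Ω[B⁄A]` is `J/J²` for the finitely generated ideal `J = ker μ`, say `J = (t₁, …, tₘ)`. Lift the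
generators of a presentation of `Ω[B⁄A]` to `y ∈ Jⁿ`. A relation matrix `P` gives `P y ∈ (J²)ⁿ`,
i.e. `P y = U t` with `U` over `J`, and writing the `tₖ` modulo `J²` in terms of the `y` gives
`(1 - V) t = C y` with `V` over `J`. Eliminating `y` and `t` with adjugates produces
`g = det (det (1 - V) • P - U adj (1 - V) C) * det (1 - V)` with `g t = 0`, so `g ∈ Ann J`, while
`g ≡ det P` modulo `J`, so `μ g = det P`.
-/

open TensorProduct

open Matrix

theorem fittingIdeal0_le {R M : Type*} [CommRing R] [AddCommGroup M] [Module R M] {K : Ideal R}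
    (h : ∀ (n : ℕ) (f : (Fin n → R) →ₗ[R] M), Function.Surjective f →
      ∀ P : Matrix (Fin n) (Fin n) R, (∀ i, P i ∈ LinearMap.ker f) → P.det ∈ K) :
    fittingIdeal0 R M ≤ K :=
  iSup_le fun n => iSup_le fun f => iSup_le fun hf => Ideal.span_le.mpr <| by
    rintro _ ⟨P, hP, rfl⟩
    exact h n f hf P hP

namespace Matrix

variable {R : Type*} [CommRing R] {m n : Type*} [Fintype m] [DecidableEq m] [Fintype n]
  [DecidableEq n]

theorem det_smul_eq_zero_of_mulVec_eq_zero_s4 {M : Matrix n n R} {y : n → R} (h : M *ᵥ y = 0) :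
    M.det • y = 0 := by
  rw [← one_mulVec y, ← smul_mulVec, ← adjugate_mul, ← mulVec_mulVec, h, mulVec_zero]

theorem exists_forall_mul_eq_zero_and_sub_det_mem {K : Ideal R} {y : n → R} {t : m → R}
    {P : Matrix n n R} {U : Matrix n m R} {C : Matrix m n R} {V : Matrix m m R}
    (hP : P *ᵥ y = U *ᵥ t) (hV : t - C *ᵥ y = V *ᵥ t)
    (hUK : ∀ i k, U i k ∈ K) (hVK : ∀ k l, V k l ∈ K) :
    ∃ g : R, (∀ k, g * t k = 0) ∧ g - P.det ∈ K := by
  set E := 1 - V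
  have hE : E *ᵥ t = C *ᵥ y := by
    rw [sub_mulVec, one_mulVec, ← hV, sub_sub_cancel]
  set M := E.det • P - U * (E.adjugate * C)
  have hEt : E.det • t = (E.adjugate * C) *ᵥ y := by
    rw [← mulVec_mulVec, ← hE, mulVec_mulVec, adjugate_mul, smul_mulVec, one_mulVec]
  have hMy : M.det • y = 0 := by
    refine det_smul_eq_zero_of_mulVec_eq_zero_s4 ?_
    rw [sub_mulVec, smul_mulVec, hP, ← mulVec_mulVec, ← hEt, mulVec_smul, sub_self]
  refine ⟨M.det * E.det, fun k => ?_, ?_⟩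
  · have : (M.det * E.det) • t = 0 := by
      rw [mul_smul, hEt, ← mulVec_smul, hMy, mulVec_zero]
    simpa using congrFun this k
  · set q := Ideal.Quotient.mk K
    have hVq : V.map q = 0 := by
      ext; simpa [q, Ideal.Quotient.eq_zero_iff_mem] using hVK ..
    have hUq : U.map q = 0 := by
      ext; simpa [q, Ideal.Quotient.eq_zero_iff_mem] using hUK ..
    have hEq : q E.det = 1 := by
      rw [RingHom.map_det, RingHom.mapMatrix_apply, Matrix.map_sub _ (map_sub q), hVq, sub_zero,
        Matrix.map_one _ (map_zero q) (map_one q), det_one]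
    have hMq : M.map q = P.map q := by
      rw [Matrix.map_sub _ (map_sub q), Matrix.map_mul, hUq, Matrix.zero_mul, sub_zero]
      ext i j
      simp [hEq]
    rw [← Ideal.Quotient.eq, map_mul, hEq, mul_one, RingHom.map_det, RingHom.map_det,
      RingHom.mapMatrix_apply, RingHom.mapMatrix_apply, hMq]

end Matrix

namespace Ideal

variable {R : Type*} [CommRing R] {I : Ideal R}

theorem exists_matrix_mulVec_eq_of_mem_sq {m n : Type*} [Fintype m] {t : m → R}
    (ht : span (Set.range t) = I) {x : n → R} (hx : ∀ i, x i ∈ I ^ 2) :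
    ∃ U : Matrix n m R, (∀ i k, U i k ∈ I) ∧ U *ᵥ t = x := by
  have hx' : ∀ i, x i ∈ I • Submodule.span R (Set.range t) := by
    rw [← span, ht, smul_eq_mul, ← pow_two]
    exact hx
  choose a ha hax using fun i =>
    (Submodule.mem_ideal_smul_span_iff_exists_sum I t (x i)).mp (hx' i)
  refine ⟨Matrix.of fun i k => a i k, fun i k => ha i k, funext fun i => ?_⟩
  rw [← hax i, Finsupp.sum_fintype _ _ fun k => zero_smul R (t k)]
  rfl

variable {S : Type*} [CommRing S] [Algebra S R]

theorem exists_toCotangent_sum_eq {ι : Type*} [Fintype ι] [DecidableEq ι]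
    (f : (ι → S) →ₗ[S] I.Cotangent) :
    ∃ y : ι → I, ∀ v : ι → S, I.toCotangent (∑ j, algebraMap S R (v j) • y j) = f v := by
  choose y hy using fun j => I.toCotangent_surjective (f fun k => if j = k then 1 else 0)
  refine ⟨y, fun v => ?_⟩
  simp only [map_sum, algebraMap_smul, LinearMap.map_smul_of_tower, hy,
    LinearMap.pi_apply_eq_sum_univ f v]

theorem mulVec_map_algebraMap_apply {ι κ : Type*} [Fintype ι] (M : Matrix κ ι S) (y : ι → I)
    (i : κ) : (M.map (algebraMap S R) *ᵥ fun j => (y j : R)) i =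
      ((∑ j, algebraMap S R (M i j) • y j : I) : R) := by
  simp [mulVec, dotProduct, Algebra.smul_def]

theorem det_mem_map_annihilator_of_forall_mem_ker (μ : R →+* S)
    (hμ : Function.LeftInverse μ (algebraMap S R)) (hIμ : I ≤ RingHom.ker μ) (hI : I.FG)
    {n : Type*} [Fintype n] [DecidableEq n] {f : (n → S) →ₗ[S] I.Cotangent}
    (hf : Function.Surjective f) {P : Matrix n n S} (hP : ∀ i, P i ∈ LinearMap.ker f) :
    P.det ∈ I.annihilator.map μ := by
  obtain ⟨m, t, ht⟩ := Submodule.fg_iff_exists_fin_generating_family.mp hI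
  have htI : ∀ k, t k ∈ I := fun k => ht ▸ subset_span ⟨k, rfl⟩
  obtain ⟨y, hy⟩ := exists_toCotangent_sum_eq f
  set y' : n → R := fun j => y j
  obtain ⟨U, hUI, hU⟩ : ∃ U : Matrix n (Fin m) R, (∀ i k, U i k ∈ I) ∧
      U *ᵥ t = P.map (algebraMap S R) *ᵥ y' := by
    refine exists_matrix_mulVec_eq_of_mem_sq ht fun i => ?_
    rw [mulVec_map_algebraMap_apply, ← toCotangent_eq_zero, hy]
    exact hP i
  choose c hc using fun k => hf (I.toCotangent ⟨t k, htI k⟩)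
  obtain ⟨V, hVI, hV⟩ : ∃ V : Matrix (Fin m) (Fin m) R, (∀ k l, V k l ∈ I) ∧
      V *ᵥ t = t - (Matrix.of c).map (algebraMap S R) *ᵥ y' := by
    refine exists_matrix_mulVec_eq_of_mem_sq ht fun k => ?_
    rw [Pi.sub_apply, mulVec_map_algebraMap_apply]
    exact (toCotangent_eq I).mp ((hc k).symm.trans (hy (c k)).symm)
  obtain ⟨g, hgt, hgP⟩ :=
    Matrix.exists_forall_mul_eq_zero_and_sub_det_mem hU.symm hV.symm hUI hVI
  have hg : g ∈ I.annihilator := by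
    rw [← ht, Submodule.mem_annihilator_span]
    rintro ⟨_, k, rfl⟩
    exact hgt k
  have hμg : μ g = P.det := by
    rw [← sub_add_cancel g, map_add, hIμ hgP, zero_add, RingHom.map_det, RingHom.mapMatrix_apply,
      Matrix.map_map, hμ.comp_eq_id, Matrix.map_id]
  exact hμg ▸ mem_map_of_mem μ hg

theorem fittingIdeal0_cotangent_le_map_annihilator (μ : R →+* S)
    (hμ : Function.LeftInverse μ (algebraMap S R)) (hIμ : I ≤ RingHom.ker μ) (hI : I.FG) :
    fittingIdeal0 S I.Cotangent ≤ I.annihilator.map μ :=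
  fittingIdeal0_le fun _ _ hf _ hP => I.det_mem_map_annihilator_of_forall_mem_ker μ hμ hIμ hI hf hP

end Ideal

/-- Let `B` be a finitely presented commutative `A`-algebra,
`μ : B ⊗[A] B → B` the multiplication map and `J = ker μ`.  Then the 0-th Fitting ideal of
the `B`-module of Kähler differentials satisfies `F₀(Ω[B⁄A]) ⊆ μ(Ann J)` as ideals of `B`. -/
theorem fittingIdeal_kaehler_le_map_annihilator
    (A B : Type*) [CommRing A] [CommRing B] [Algebra A B]
    [Algebra.FinitePresentation A B] :
    fittingIdeal0 B (Ω[B⁄A]) ≤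
      Ideal.map (Algebra.TensorProduct.lmul' A : B ⊗[A] B →ₐ[A] B)
        (RingHom.ker (Algebra.TensorProduct.lmul' A : B ⊗[A] B →ₐ[A] B)).annihilator := by
  have : Algebra.FinitePresentation A (B ⊗[A] B) := .trans A B (B ⊗[A] B)
  set μ : B ⊗[A] B →ₐ[A] B := Algebra.TensorProduct.lmul' A
  have hμ : Function.LeftInverse μ (algebraMap B (B ⊗[A] B)) := fun b => by
    simp [μ, Algebra.TensorProduct.algebraMap_apply]
  exact Ideal.fittingIdeal0_cotangent_le_map_annihilator μ.toRingHom hμ le_rfl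
    (Algebra.FinitePresentation.ker_fG_of_surjective μ hμ.surjective)
end

section
/- Let A be a commutative ring, I an ideal of the polynomial ring A[X_1, …, X_n], and B = A[X_1, …, X_n]/I, so that B ⊗_A B ≅ A[Y_1, …, Y_n, Z_1, …, Z_n]/(I(Y) + I(Z)) with multiplication map μ given by evaluation at Y = Z = X and J = ker μ = ⟨y_1 − z_1, …, y_n − z_n⟩. Let F_1, …, F_n ∈ I and let U = (U_{ij}) ∈ M_n(A[Y, Z]) be any matrix satisfying F_i(Y) − F_i(Z) = Σ_j (Y_j − Z_j) U_{ij}(Y, Z) for each i. Then the image δ_F of det(U) in B ⊗_A B annihilates J, i.e. δ_F · (y_i − z_i) = 0 for all i, and μ(δ_F) is the image in B of the Jacobian determinant det(∂F_i/∂X_j). -/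
open TensorProduct MvPolynomial

set_option maxHeartbeats 1000000
set_option synthInstance.maxHeartbeats 400000

/-- Auxiliary: if a vector `d` is killed by a matrix `M` (in the sense
`∑ j, d j * M i j = 0` for all `i`), then `det M` kills each entry of `d`. -/
lemma aux_det_ann {R : Type*} [CommRing R] {n : ℕ} (M : Matrix (Fin n) (Fin n) R)
    (d : Fin n → R) (h : ∀ i, ∑ j, d j * M i j = 0) : ∀ j, M.det * d j = 0 := by
  have hMd : M.mulVec d = 0 := by
    funext i
    have := h i
    simp only [Matrix.mulVec, dotProduct, Pi.zero_apply]
    rw [← this]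
    exact Finset.sum_congr rfl fun j _ => mul_comm _ _
  intro j
  have h1 : M.adjugate.mulVec (M.mulVec d) = 0 := by rw [hMd, Matrix.mulVec_zero]
  rw [Matrix.mulVec_mulVec, Matrix.adjugate_mul, Matrix.smul_mulVec,
    Matrix.one_mulVec] at h1
  have h2 := congrFun h1 j
  simpa [smul_eq_mul] using h2

/-- Let `A` be a commutative ring, `I` an ideal of `A[X_1, …, X_n]` and
`B = A[X]/I`.  We realize `B ⊗[A] B` via the evaluation map
`Φ : A[Y, Z] → B ⊗[A] B`, `Y_j ↦ x_j ⊗ 1`, `Z_j ↦ 1 ⊗ x_j` (the variables of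
`A[Y, Z] = MvPolynomial (Fin n ⊕ Fin n) A` indexed by `Sum.inl j ↝ Y_j`, `Sum.inr j ↝ Z_j`),
and `μ : B ⊗[A] B → B` is the multiplication map, with `J = ker μ`.
Given `F_1, …, F_n ∈ I` and a matrix `U` with
`F_i(Y) - F_i(Z) = Σ_j (Y_j - Z_j) U_{ij}(Y, Z)`, the Bezoutian `δ_F = Φ (det U)`
annihilates `J` (i.e. `δ_F * (y_i - z_i) = 0` for all `i`), and `μ δ_F` is the image in `B`
of the Jacobian determinant `det (∂F_i/∂X_j)`. -/
theorem bezoutien_annihilates_and_maps_to_jacobian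
    (A : Type*) [CommRing A] (n : ℕ) (I : Ideal (MvPolynomial (Fin n) A))
    (F : Fin n → MvPolynomial (Fin n) A) (hF : ∀ i, F i ∈ I)
    (U : Matrix (Fin n) (Fin n) (MvPolynomial (Fin n ⊕ Fin n) A))
    (hU : ∀ i, rename Sum.inl (F i) - rename Sum.inr (F i)
        = ∑ j, (X (Sum.inl j) - X (Sum.inr j)) * U i j) :
    letI B := MvPolynomial (Fin n) A ⧸ I
    let x : Fin n → B := fun i => Ideal.Quotient.mk I (X i)
    let Φ : MvPolynomial (Fin n ⊕ Fin n) A →ₐ[A] B ⊗[A] B :=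
      aeval (Sum.elim (fun j => x j ⊗ₜ[A] (1 : B)) (fun j => (1 : B) ⊗ₜ[A] x j))
    let δ : B ⊗[A] B := Φ U.det
    δ ∈ (RingHom.ker (Algebra.TensorProduct.lmul' A : B ⊗[A] B →ₐ[A] B)).annihilator ∧
    (∀ i, δ * (x i ⊗ₜ[A] (1 : B) - (1 : B) ⊗ₜ[A] x i) = 0) ∧
    Algebra.TensorProduct.lmul' A δ
      = Ideal.Quotient.mk I (Matrix.det (Matrix.of fun i j => pderiv j (F i))) := by
  intro x Φ δ
  classical
  set μ : ((MvPolynomial (Fin n) A ⧸ I) ⊗[A] (MvPolynomial (Fin n) A ⧸ I)) →ₐ[A] (MvPolynomial (Fin n) A ⧸ I) := Algebra.TensorProduct.lmul' A with hμdef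
  -- `aeval x` is the quotient map on polynomials
  have haevalx : ∀ p : MvPolynomial (Fin n) A, aeval x p = Ideal.Quotient.mk I p := by
    intro p
    have h1 : (Ideal.Quotient.mkₐ A I : MvPolynomial (Fin n) A →ₐ[A] (MvPolynomial (Fin n) A ⧸ I)) = aeval x :=
      (aeval_unique (Ideal.Quotient.mkₐ A I)).trans rfl
    rw [← h1]; rfl
  set M : Matrix (Fin n) (Fin n) ((MvPolynomial (Fin n) A ⧸ I) ⊗[A] (MvPolynomial (Fin n) A ⧸ I)) := U.map Φ with hMdef
  set d : Fin n → ((MvPolynomial (Fin n) A ⧸ I) ⊗[A] (MvPolynomial (Fin n) A ⧸ I)) := fun j => x j ⊗ₜ[A] (1 : (MvPolynomial (Fin n) A ⧸ I)) - (1 : (MvPolynomial (Fin n) A ⧸ I)) ⊗ₜ[A] x j with hddef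
  have hδdet : δ = M.det := by
    show Φ U.det = M.det
    rw [hMdef]
    have h := AlgHom.map_det (R := A) (T := ((MvPolynomial (Fin n) A ⧸ I) ⊗[A] (MvPolynomial (Fin n) A ⧸ I))) (Φ : MvPolynomial (Fin n ⊕ Fin n) A →ₐ[A] ((MvPolynomial (Fin n) A ⧸ I) ⊗[A] (MvPolynomial (Fin n) A ⧸ I))) U
    rw [AlgHom.mapMatrix_apply] at h
    exact h
  have hΦinl : ∀ p : MvPolynomial (Fin n) A, Φ (rename Sum.inl p) = aeval x p ⊗ₜ[A] (1 : (MvPolynomial (Fin n) A ⧸ I)) := by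
    intro p
    show (aeval (Sum.elim (fun j => x j ⊗ₜ[A] (1 : (MvPolynomial (Fin n) A ⧸ I))) (fun j => (1 : (MvPolynomial (Fin n) A ⧸ I)) ⊗ₜ[A] x j))) (rename Sum.inl p) = _
    rw [aeval_rename]
    rw [show ((Sum.elim (fun j => x j ⊗ₜ[A] (1 : (MvPolynomial (Fin n) A ⧸ I))) (fun j => (1 : (MvPolynomial (Fin n) A ⧸ I)) ⊗ₜ[A] x j)) ∘ Sum.inl) = (fun j => (Algebra.TensorProduct.includeLeft : (MvPolynomial (Fin n) A ⧸ I) →ₐ[A] ((MvPolynomial (Fin n) A ⧸ I) ⊗[A] (MvPolynomial (Fin n) A ⧸ I))) (x j)) from rfl]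
    rw [← comp_aeval_apply]
    rfl
  have hΦinr : ∀ p : MvPolynomial (Fin n) A, Φ (rename Sum.inr p) = (1 : (MvPolynomial (Fin n) A ⧸ I)) ⊗ₜ[A] aeval x p := by
    intro p
    show (aeval (Sum.elim (fun j => x j ⊗ₜ[A] (1 : (MvPolynomial (Fin n) A ⧸ I))) (fun j => (1 : (MvPolynomial (Fin n) A ⧸ I)) ⊗ₜ[A] x j))) (rename Sum.inr p) = _
    rw [aeval_rename]
    rw [show ((Sum.elim (fun j => x j ⊗ₜ[A] (1 : (MvPolynomial (Fin n) A ⧸ I))) (fun j => (1 : (MvPolynomial (Fin n) A ⧸ I)) ⊗ₜ[A] x j)) ∘ Sum.inr) = (fun j => (Algebra.TensorProduct.includeRight : (MvPolynomial (Fin n) A ⧸ I) →ₐ[A] ((MvPolynomial (Fin n) A ⧸ I) ⊗[A] (MvPolynomial (Fin n) A ⧸ I))) (x j)) from rfl]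
    rw [← comp_aeval_apply]
    rfl
  have hmkF : ∀ i, Ideal.Quotient.mk I (F i) = 0 := fun i =>
    Ideal.Quotient.eq_zero_iff_mem.mpr (hF i)
  have hΦd : ∀ j, Φ (X (Sum.inl j) - X (Sum.inr j)) = d j := by
    intro j
    rw [map_sub]
    show (aeval (Sum.elim (fun j => x j ⊗ₜ[A] (1 : (MvPolynomial (Fin n) A ⧸ I))) (fun j => (1 : (MvPolynomial (Fin n) A ⧸ I)) ⊗ₜ[A] x j))) (X (Sum.inl j))
      - (aeval (Sum.elim (fun j => x j ⊗ₜ[A] (1 : (MvPolynomial (Fin n) A ⧸ I))) (fun j => (1 : (MvPolynomial (Fin n) A ⧸ I)) ⊗ₜ[A] x j))) (X (Sum.inr j)) = d j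
    rw [aeval_X, aeval_X]
    rfl
  -- d is killed by M row-wise
  have hMd : ∀ i, ∑ j, d j * M i j = 0 := by
    intro i
    have h0 := congrArg Φ (hU i)
    rw [map_sub, hΦinl, hΦinr, haevalx, hmkF i, map_sum] at h0
    simp only [TensorProduct.zero_tmul, TensorProduct.tmul_zero] at h0
    have h0' : (0 : ((MvPolynomial (Fin n) A ⧸ I) ⊗[A] (MvPolynomial (Fin n) A ⧸ I))) = ∑ j, d j * M i j := by
      rw [show ((0:((MvPolynomial (Fin n) A ⧸ I) ⊗[A] (MvPolynomial (Fin n) A ⧸ I))) - (0:((MvPolynomial (Fin n) A ⧸ I) ⊗[A] (MvPolynomial (Fin n) A ⧸ I)))) = (0:((MvPolynomial (Fin n) A ⧸ I) ⊗[A] (MvPolynomial (Fin n) A ⧸ I))) from by ring] at h0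
      rw [h0]
      refine Finset.sum_congr rfl fun j _ => ?_
      rw [map_mul, hΦd]
      rfl
    exact h0'.symm
  have hδd : ∀ j, δ * d j = 0 := by
    intro j
    rw [hδdet]
    exact aux_det_ann M d hMd j
  -- δ kills b ⊗ 1 - 1 ⊗ b for every b
  have hδall : ∀ b : (MvPolynomial (Fin n) A ⧸ I), δ * (b ⊗ₜ[A] (1 : (MvPolynomial (Fin n) A ⧸ I)) - (1 : (MvPolynomial (Fin n) A ⧸ I)) ⊗ₜ[A] b) = 0 := by
    have htop : Algebra.adjoin A (Set.range x) = ⊤ := by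
      rw [show Set.range x = (Ideal.Quotient.mkₐ A I) '' Set.range (X : Fin n → MvPolynomial (Fin n) A) from by
        rw [← Set.range_comp]; rfl]
      rw [← AlgHom.map_adjoin, adjoin_range_X, Algebra.map_top]
      exact (AlgHom.range_eq_top _).mpr (Ideal.Quotient.mkₐ_surjective A I)
    intro b
    have hb : b ∈ Algebra.adjoin A (Set.range x) := htop ▸ Algebra.mem_top
    induction hb using Algebra.adjoin_induction with
    | mem y hy =>
      obtain ⟨j, rfl⟩ := hy
      exact hδd j
    | algebraMap a =>
      have heq : (algebraMap A (MvPolynomial (Fin n) A ⧸ I) a) ⊗ₜ[A] (1 : (MvPolynomial (Fin n) A ⧸ I)) = (1 : (MvPolynomial (Fin n) A ⧸ I)) ⊗ₜ[A] (algebraMap A (MvPolynomial (Fin n) A ⧸ I) a) := by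
        rw [Algebra.algebraMap_eq_smul_one, TensorProduct.smul_tmul]
      rw [heq]
      ring
    | add y z _ _ hy hz =>
      rw [TensorProduct.add_tmul, TensorProduct.tmul_add]
      linear_combination hy + hz
    | mul y z _ _ hy hz =>
      have k1 : (y ⊗ₜ[A] (1:(MvPolynomial (Fin n) A ⧸ I))) * (z ⊗ₜ[A] (1:(MvPolynomial (Fin n) A ⧸ I))) = (y*z) ⊗ₜ[A] (1:(MvPolynomial (Fin n) A ⧸ I)) := by
        rw [Algebra.TensorProduct.tmul_mul_tmul, mul_one]
      have k2 : ((1:(MvPolynomial (Fin n) A ⧸ I)) ⊗ₜ[A] y) * ((1:(MvPolynomial (Fin n) A ⧸ I)) ⊗ₜ[A] z) = (1:(MvPolynomial (Fin n) A ⧸ I)) ⊗ₜ[A] (y*z) := by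
        rw [Algebra.TensorProduct.tmul_mul_tmul, mul_one]
      rw [← k1, ← k2]
      linear_combination (z ⊗ₜ[A] (1:(MvPolynomial (Fin n) A ⧸ I))) * hy + ((1:(MvPolynomial (Fin n) A ⧸ I)) ⊗ₜ[A] y) * hz
  -- δ kills everything congruent to its image under μ
  have hker : ∀ t : ((MvPolynomial (Fin n) A ⧸ I) ⊗[A] (MvPolynomial (Fin n) A ⧸ I)), δ * (t - (μ t) ⊗ₜ[A] (1 : (MvPolynomial (Fin n) A ⧸ I))) = 0 := by
    intro t
    induction t using TensorProduct.induction_on with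
    | zero =>
      rw [map_zero, TensorProduct.zero_tmul]
      ring
    | tmul b c =>
      have hμbc : μ (b ⊗ₜ[A] c) = b * c := Algebra.TensorProduct.lmul'_apply_tmul b c
      rw [hμbc]
      have k1 : (b ⊗ₜ[A] (1:(MvPolynomial (Fin n) A ⧸ I))) * ((1:(MvPolynomial (Fin n) A ⧸ I)) ⊗ₜ[A] c) = b ⊗ₜ[A] c := by
        rw [Algebra.TensorProduct.tmul_mul_tmul, mul_one, one_mul]
      have k2 : (b ⊗ₜ[A] (1:(MvPolynomial (Fin n) A ⧸ I))) * (c ⊗ₜ[A] (1:(MvPolynomial (Fin n) A ⧸ I))) = (b*c) ⊗ₜ[A] (1:(MvPolynomial (Fin n) A ⧸ I)) := by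
        rw [Algebra.TensorProduct.tmul_mul_tmul, mul_one]
      rw [← k1, ← k2]
      linear_combination (-(b ⊗ₜ[A] (1:(MvPolynomial (Fin n) A ⧸ I)))) * hδall c
    | add s t hs ht =>
      rw [map_add, TensorProduct.add_tmul]
      linear_combination hs + ht
  refine ⟨?_, fun i => hδd i, ?_⟩
  · rw [Submodule.mem_annihilator]
    intro t ht
    have ht' : μ t = 0 := ht
    have h := hker t
    rw [ht', TensorProduct.zero_tmul] at h
    have h2 : δ * t = 0 := by linear_combination h
    show δ * t = 0
    exact h2
  · -- the Jacobian computation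
    have hV : ∀ i k, aeval (Sum.elim x x) (U i k) = Ideal.Quotient.mk I (pderiv k (F i)) := by
      intro i k
      have h1 := congrArg (pderiv (Sum.inl k)) (hU i)
      rw [map_sub, pderiv_rename Sum.inl_injective, map_sum] at h1
      have h2 : pderiv (Sum.inl k) (rename Sum.inr (F i)) = 0 := by
        apply pderiv_eq_zero_of_notMem_vars
        intro hmem
        obtain ⟨j, _, hj⟩ := mem_vars_rename _ _ hmem
        exact Sum.inl_ne_inr hj.symm
      rw [h2, sub_zero] at h1
      have h3 := congrArg (aeval (Sum.elim x x) :
        MvPolynomial (Fin n ⊕ Fin n) A →ₐ[A] (MvPolynomial (Fin n) A ⧸ I)) h1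
      rw [map_sum] at h3
      have h4 : ∀ j, aeval (Sum.elim x x)
          (pderiv (Sum.inl k) ((X (Sum.inl j) - X (Sum.inr j)) * U i j))
          = (if j = k then aeval (Sum.elim x x) (U i j) else 0) := by
        intro j
        have e1 : (pderiv (Sum.inl k)) ((X (Sum.inl j) - X (Sum.inr j)) * U i j)
            = (if j = k then (1 : MvPolynomial (Fin n ⊕ Fin n) A) else 0) * U i j
              + (X (Sum.inl j) - X (Sum.inr j)) * (pderiv (Sum.inl k)) (U i j) := by
          by_cases h : j = k
          · subst h
            rw [pderiv_mul, map_sub, pderiv_X_self, pderiv_X_of_ne (by simp), if_pos rfl,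
              sub_zero]
          · rw [pderiv_mul, map_sub, pderiv_X_of_ne (by simp [h]), pderiv_X_of_ne (by simp),
              if_neg h, sub_zero, zero_mul, zero_add]
        rw [e1]
        by_cases h : j = k
        · subst h
          rw [if_pos rfl, if_pos rfl, one_mul, map_add, map_mul, map_sub, aeval_X, aeval_X]
          simp only [Sum.elim_inl, Sum.elim_inr]
          ring
        · rw [if_neg h, if_neg h, zero_mul, zero_add, map_mul, map_sub, aeval_X, aeval_X]
          simp only [Sum.elim_inl, Sum.elim_inr]
          ring
      have h6 : (∑ j, aeval (Sum.elim x x)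
          (pderiv (Sum.inl k) ((X (Sum.inl j) - X (Sum.inr j)) * U i j)))
          = aeval (Sum.elim x x) (U i k) := by
        rw [Finset.sum_congr rfl fun j _ => h4 j, Finset.sum_ite_eq' Finset.univ k,
          if_pos (Finset.mem_univ k)]
      rw [h6] at h3
      rw [← h3, aeval_rename]
      exact haevalx _
    have hcomp : ∀ p : MvPolynomial (Fin n ⊕ Fin n) A,
        μ (Φ p) = aeval (Sum.elim x x) p := by
      intro p
      have hXs : (fun s => (μ.comp Φ) (X s)) = Sum.elim x x := by
        funext s
        cases s with
        | inl j =>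
          show μ (Φ (X (Sum.inl j))) = x j
          rw [show Φ (X (Sum.inl j)) = x j ⊗ₜ[A] (1 : (MvPolynomial (Fin n) A ⧸ I)) from aeval_X _ _]
          exact (Algebra.TensorProduct.lmul'_apply_tmul (x j) 1).trans (mul_one _)
        | inr j =>
          show μ (Φ (X (Sum.inr j))) = x j
          rw [show Φ (X (Sum.inr j)) = (1 : (MvPolynomial (Fin n) A ⧸ I)) ⊗ₜ[A] x j from aeval_X _ _]
          exact (Algebra.TensorProduct.lmul'_apply_tmul 1 (x j)).trans (one_mul _)
      rw [show μ (Φ p) = (μ.comp Φ) p from rfl]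
      rw [show μ.comp Φ = aeval (fun s => (μ.comp Φ) (X s)) from aeval_unique _]
      rw [hXs]
    rw [show (Algebra.TensorProduct.lmul' A : ((MvPolynomial (Fin n) A ⧸ I) ⊗[A] (MvPolynomial (Fin n) A ⧸ I)) →ₐ[A] (MvPolynomial (Fin n) A ⧸ I)) δ = μ (Φ U.det) from rfl]
    rw [hcomp]
    have hdet1 : aeval (Sum.elim x x) U.det
        = (U.map (aeval (Sum.elim x x) : MvPolynomial (Fin n ⊕ Fin n) A →ₐ[A] (MvPolynomial (Fin n) A ⧸ I))).det := by
      have h := AlgHom.map_det (R := A) (T := (MvPolynomial (Fin n) A ⧸ I))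
        (aeval (Sum.elim x x) : MvPolynomial (Fin n ⊕ Fin n) A →ₐ[A] (MvPolynomial (Fin n) A ⧸ I)) U
      rw [AlgHom.mapMatrix_apply] at h
      exact h
    have hdet2 : Ideal.Quotient.mk I (Matrix.det (Matrix.of fun i j => pderiv j (F i)))
        = ((Matrix.of fun i j => pderiv j (F i)).map (Ideal.Quotient.mk I)).det := by
      have h := RingHom.map_det (Ideal.Quotient.mk I) (Matrix.of fun i j => pderiv j (F i))
      rw [RingHom.mapMatrix_apply] at h
      exact h
    rw [hdet1, hdet2]
    congr 1
    funext i j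
    show aeval (Sum.elim x x) (U i j) = Ideal.Quotient.mk I (pderiv j (F i))
    exact hV i j
end

section
/- Let A be a commutative ring and B an A-algebra that is free of rank n with A-basis ε = (ε_1, …, ε_n). Let μ: B ⊗_A B → B be the multiplication map, J = ker μ, and let δ ∈ Ann(J) be written δ = u_1 ⊗ ε_1 + ⋯ + u_n ⊗ ε_n with u_j ∈ B. Set b = μ(δ). Then the matrix M_b ∈ M_n(A) of multiplication by b in the basis ε satisfies M_b = (Tr_{B/A}(u_i ε_j))_{1≤i,j≤n} = P_u · T_ε, where P_u = (u_{ij}) ∈ M_n(A) is defined by u_i = Σ_j u_{ij} ε_j and T_ε = (Tr_{B/A}(ε_i ε_j))_{1≤i,j≤n} is the trace matrix of the basis. -/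
open TensorProduct

/-!
Since `δ` kills `x ⊗ 1 - 1 ⊗ x`, we have `δ (x ⊗ 1) = δ (1 ⊗ x)`; applying `y ⊗ z ↦ f y • z`
for a linear form `f` gives `∑ f (u_i x) ε_i = (∑ f (u_i) ε_i) x`. With `f` the coordinate forms
this shows `b = ∑ u_i ε_i = ∑ Tr (u_i) ε_i`, and then with `f = Tr`, `x = ε_j` it exhibits
`Tr (u_i ε_j)` as the `i`-th coordinate of `b ε_j`. Expanding `u_i` in the basis gives `P_u T_ε`.
-/

section

variable {A B : Type*} [CommRing A] [CommRing B] [Algebra A B] {ι : Type*} [Fintype ι]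

theorem mul_tmul_one_eq_mul_one_tmul_of_mem_annihilator {δ : B ⊗[A] B}
    (hδ : δ ∈ (KaehlerDifferential.ideal A B).annihilator) (x : B) :
    δ * (x ⊗ₜ 1) = δ * (1 ⊗ₜ x) := by
  have h := Submodule.mem_annihilator.mp hδ _
    (KaehlerDifferential.one_smul_sub_smul_one_mem_ideal A x)
  rwa [smul_eq_mul, mul_sub, sub_eq_zero, eq_comm] at h

theorem sum_apply_mul_smul_eq_of_mem_annihilator {u v : ι → B}
    (hδ : ∑ i, u i ⊗ₜ[A] v i ∈ (KaehlerDifferential.ideal A B).annihilator)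
    (f : B →ₗ[A] A) (x : B) :
    ∑ i, f (u i * x) • v i = (∑ i, f (u i) • v i) * x := by
  have h := congrArg (TensorProduct.lift ((LinearMap.lsmul A B).comp f))
    (mul_tmul_one_eq_mul_one_tmul_of_mem_annihilator hδ x)
  simpa [Finset.sum_mul, Algebra.TensorProduct.tmul_mul_tmul, smul_mul_assoc] using h

theorem Algebra.trace_eq_sum_repr_mul (ε : Module.Basis ι A B) (y : B) :
    Algebra.trace A B y = ∑ k, ε.repr (y * ε k) k := by
  classical
  simp [Algebra.trace_eq_matrix_trace ε, Matrix.trace, Algebra.leftMulMatrix_eq_repr_mul]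

theorem sum_mul_eq_sum_trace_smul_of_mem_annihilator (ε : Module.Basis ι A B) {u : ι → B}
    (hδ : ∑ i, u i ⊗ₜ[A] ε i ∈ (KaehlerDifferential.ideal A B).annihilator) :
    ∑ i, u i * ε i = ∑ i, Algebra.trace A B (u i) • ε i := by
  calc ∑ i, u i * ε i = ∑ i, ∑ k, ε.repr (u i) k • (ε k * ε i) := by
        simp_rw [← smul_mul_assoc, ← Finset.sum_mul, ε.sum_repr]
    _ = ∑ k, (∑ i, ε.coord k (u i) • ε i) * ε k := by
        rw [Finset.sum_comm]
        simp_rw [Finset.sum_mul, smul_mul_assoc, Module.Basis.coord_apply, mul_comm (ε _) (ε _)]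
    _ = ∑ k, ∑ i, ε.repr (u i * ε k) k • ε i := by
        simp_rw [← sum_apply_mul_smul_eq_of_mem_annihilator hδ, Module.Basis.coord_apply]
    _ = ∑ i, Algebra.trace A B (u i) • ε i := by
        simp_rw [Algebra.trace_eq_sum_repr_mul ε, Finset.sum_smul]
        exact Finset.sum_comm

theorem leftMulMatrix_lmul'_eq_of_mem_annihilator [DecidableEq ι] (ε : Module.Basis ι A B)
    {u : ι → B} (hδ : ∑ i, u i ⊗ₜ[A] ε i ∈ (KaehlerDifferential.ideal A B).annihilator) :
    Algebra.leftMulMatrix ε (Algebra.TensorProduct.lmul' A (∑ i, u i ⊗ₜ[A] ε i))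
      = Matrix.of fun i j => Algebra.trace A B (u i * ε j) := by
  have hb : Algebra.TensorProduct.lmul' A (∑ i, u i ⊗ₜ[A] ε i) = ∑ i, u i * ε i := by
    simp [Algebra.TensorProduct.lmul'_apply_tmul]
  ext i j
  rw [Algebra.leftMulMatrix_eq_repr_mul, hb, sum_mul_eq_sum_trace_smul_of_mem_annihilator ε hδ,
    ← sum_apply_mul_smul_eq_of_mem_annihilator hδ, ε.repr_sum_self, Matrix.of_apply]

theorem Algebra.of_trace_mul_eq_of_repr_mul_traceMatrix (ε : Module.Basis ι A B) (u : ι → B) :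
    (Matrix.of fun i j => Algebra.trace A B (u i * ε j))
      = (Matrix.of fun i j => ε.repr (u i) j) * Algebra.traceMatrix A ε := by
  ext i j
  simp only [Matrix.of_apply, Matrix.mul_apply, Algebra.traceMatrix_apply,
    Algebra.traceForm_apply]
  conv_lhs => rw [← ε.sum_repr (u i)]
  simp only [Finset.sum_mul, map_sum, smul_mul_assoc, map_smul, smul_eq_mul]

end

/-- Let `B` be an `A`-algebra, free of rank `n` as an `A`-module with basis
`ε`.  Let `μ : B ⊗[A] B → B` be the multiplication map, `J = ker μ`, and let
`δ = Σ_i u_i ⊗ ε_i ∈ Ann J`; set `b = μ δ`.  Then the matrix of multiplication by `b` in the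
basis `ε` equals `(Tr_{B/A}(u_i ε_j))_{i,j}` and also equals `P_u * T_ε`, where
`P_u = (u_{ij})` is given by `u_i = Σ_j u_{ij} ε_j` and `T_ε = (Tr_{B/A}(ε_i ε_j))_{i,j}`
is the trace matrix of the basis. -/
theorem mul_matrix_eq_trace_matrix_of_mem_annihilator
    (A B : Type*) [CommRing A] [CommRing B] [Algebra A B]
    (n : ℕ) (ε : Module.Basis (Fin n) A B) (u : Fin n → B)
    (hδ : (∑ i, u i ⊗ₜ[A] ε i) ∈
      (RingHom.ker (Algebra.TensorProduct.lmul' A : B ⊗[A] B →ₐ[A] B)).annihilator) :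
    Algebra.leftMulMatrix ε (Algebra.TensorProduct.lmul' A (∑ i, u i ⊗ₜ[A] ε i))
        = Matrix.of (fun i j => Algebra.trace A B (u i * ε j)) ∧
      Algebra.leftMulMatrix ε (Algebra.TensorProduct.lmul' A (∑ i, u i ⊗ₜ[A] ε i))
        = (Matrix.of fun i j => ε.repr (u i) j) * Algebra.traceMatrix A ε := by
  have h := leftMulMatrix_lmul'_eq_of_mem_annihilator ε hδ
  exact ⟨h, h.trans (Algebra.of_trace_mul_eq_of_repr_mul_traceMatrix ε u)⟩
end

section
/- Let A be a commutative ring and B an A-algebra that is free of rank n with A-basis ε = (ε_1, …, ε_n). Let μ: B ⊗_A B → B be the multiplication map, J = ker μ, and let δ ∈ Ann(J) be written δ = u_1 ⊗ ε_1 + ⋯ + u_n ⊗ ε_n with u_j ∈ B, and set b = μ(δ). Then N_{B/A}(b) = det(P_u) · Disc(ε), where P_u ∈ M_n(A) is the matrix with rows the coordinates of the u_i in the basis ε and Disc(ε) = det((Tr_{B/A}(ε_i ε_j))_{i,j}). In particular, Disc(ε) divides N_{B/A}(b) in A for every b ∈ μ(Ann(J)). -/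
/-! For `δ ∈ Ann J` the multiplication `μ` agrees with the contraction `x ⊗ y ↦ Tr(y) x`:
in a basis, `μ y = ∑ⱼ εⱼ*(y · (εⱼ ⊗ 1))` and `Tr`-contraction of `y` is `∑ⱼ εⱼ*(y · (1 ⊗ εⱼ))`
(with `εⱼ*` applied to the right factor), and `δ` kills `εⱼ ⊗ 1 - 1 ⊗ εⱼ ∈ J`.
Applied to `δ · (1 ⊗ x) ∈ Ann J` this gives `μ(δ) x = ∑ᵢ Tr(εᵢ x) uᵢ`, so multiplication by
`μ(δ)` has matrix `P_uᵀ` times the trace matrix; take determinants. -/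

open TensorProduct
open scoped Matrix

namespace Algebra.TensorProduct

variable {A B : Type*} [CommRing A] [CommRing B] [Algebra A B]

local notation "μ" => (lmul' A : B ⊗[A] B →ₐ[A] B)

noncomputable def contractRight (f : B →ₗ[A] A) : B ⊗[A] B →ₗ[A] B :=
  _root_.TensorProduct.rid A B ∘ₗ f.lTensor B

@[simp]
lemma contractRight_tmul (f : B →ₗ[A] A) (x y : B) : contractRight f (x ⊗ₜ y) = f y • x := rfl

lemma mul_tmul_one_eq_mul_one_tmul_of_mem_annihilator {δ : B ⊗[A] B}
    (hδ : δ ∈ (RingHom.ker μ).annihilator) (x : B) :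
    δ * (x ⊗ₜ 1) = δ * (1 ⊗ₜ x) := by
  have hx : x ⊗ₜ[A] (1 : B) - 1 ⊗ₜ x ∈ RingHom.ker μ := by
    simp [RingHom.mem_ker, lmul'_apply_tmul]
  rw [← sub_eq_zero, ← mul_sub]
  exact Submodule.mem_annihilator.mp hδ _ hx

variable {ι : Type*} [Fintype ι] (ε : Module.Basis ι A B)

lemma lmul'_eq_sum_contractRight_coord (y : B ⊗[A] B) :
    μ y = ∑ j, contractRight (ε.coord j) (y * (ε j ⊗ₜ 1)) := by
  induction y using TensorProduct.induction_on with
  | zero => simp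
  | tmul a c =>
    simp only [tmul_mul_tmul, mul_one, contractRight_tmul, lmul'_apply_tmul,
      Module.Basis.coord_apply, ← mul_smul_comm, ← Finset.mul_sum, ε.sum_repr]
  | add y z hy hz => simp only [map_add, add_mul, hy, hz, Finset.sum_add_distrib]

lemma contractRight_trace_eq_sum_contractRight_coord (y : B ⊗[A] B) :
    contractRight (Algebra.trace A B) y = ∑ j, contractRight (ε.coord j) (y * (1 ⊗ₜ ε j)) := by
  classical
  induction y using TensorProduct.induction_on with
  | zero => simp
  | tmul a c =>
    simp only [tmul_mul_tmul, mul_one, contractRight_tmul, ← Finset.sum_smul,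
      Algebra.trace_eq_matrix_trace ε, Matrix.trace, Matrix.diag_apply,
      Algebra.leftMulMatrix_eq_repr_mul, Module.Basis.coord_apply]
  | add y z hy hz => simp only [map_add, add_mul, hy, hz, Finset.sum_add_distrib]

lemma lmul'_eq_contractRight_trace_of_mem_annihilator [Module.Free A B] [Module.Finite A B]
    {δ : B ⊗[A] B} (hδ : δ ∈ (RingHom.ker μ).annihilator) :
    μ δ = contractRight (Algebra.trace A B) δ := by
  let ε := Module.Free.chooseBasis A B
  rw [lmul'_eq_sum_contractRight_coord ε, contractRight_trace_eq_sum_contractRight_coord ε]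
  simp only [mul_tmul_one_eq_mul_one_tmul_of_mem_annihilator hδ]

lemma lmul'_mul_eq_contractRight_trace_of_mem_annihilator [Module.Free A B] [Module.Finite A B]
    {δ : B ⊗[A] B} (hδ : δ ∈ (RingHom.ker μ).annihilator) (x : B) :
    μ δ * x = contractRight (Algebra.trace A B) (δ * (1 ⊗ₜ x)) := by
  have hδx : δ * (1 ⊗ₜ x) ∈ (RingHom.ker μ).annihilator := Ideal.mul_mem_right _ _ hδ
  rw [← lmul'_eq_contractRight_trace_of_mem_annihilator hδx,
    ← mul_tmul_one_eq_mul_one_tmul_of_mem_annihilator hδ, map_mul, lmul'_apply_tmul, mul_one]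

lemma lmul'_surjective : Function.Surjective μ := fun x =>
  ⟨x ⊗ₜ 1, by rw [lmul'_apply_tmul, mul_one]⟩

lemma sum_basis_repr_tmul {C M : Type*} [CommSemiring C] [Algebra A C] [AddCommMonoid M]
    [Module A M] (b : Module.Basis ι A M) (x : C ⊗[A] M) :
    ∑ i, (basis C b).repr x i ⊗ₜ b i = x := by
  conv_rhs => rw [← (basis C b).sum_repr x]
  simp only [basis_repr_symm_apply']

variable [DecidableEq ι]

lemma leftMulMatrix_lmul'_sum_tmul_of_mem_annihilator {u : ι → B}
    (hu : ∑ i, u i ⊗ₜ ε i ∈ (RingHom.ker μ).annihilator) :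
    Algebra.leftMulMatrix ε (μ (∑ i, u i ⊗ₜ ε i)) =
      (Matrix.of fun i j => ε.repr (u i) j)ᵀ * Algebra.traceMatrix A ε := by
  have := Module.Free.of_basis ε
  have := Module.Finite.of_basis ε
  ext k j
  rw [Algebra.leftMulMatrix_eq_repr_mul, lmul'_mul_eq_contractRight_trace_of_mem_annihilator hu]
  simp only [Finset.sum_mul, tmul_mul_tmul, mul_one, map_sum, contractRight_tmul, map_smul,
    Finset.sum_apply', Finsupp.smul_apply, smul_eq_mul, Matrix.mul_apply, Matrix.transpose_apply,
    Matrix.of_apply, Algebra.traceMatrix_apply, Algebra.traceForm_apply]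
  exact Finset.sum_congr rfl fun i _ => mul_comm _ _

lemma norm_lmul'_sum_tmul_of_mem_annihilator {u : ι → B}
    (hu : ∑ i, u i ⊗ₜ ε i ∈ (RingHom.ker μ).annihilator) :
    Algebra.norm A (μ (∑ i, u i ⊗ₜ ε i)) =
      (Matrix.of fun i j => ε.repr (u i) j).det * Algebra.discr A ε := by
  rw [Algebra.norm_eq_matrix_det ε, leftMulMatrix_lmul'_sum_tmul_of_mem_annihilator ε hu,
    Matrix.det_mul, Matrix.det_transpose, Algebra.discr_def]

end Algebra.TensorProduct

/-- Let `B` be an `A`-algebra, free of rank `n` as an `A`-module with basis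
`ε`.  Let `μ : B ⊗[A] B → B` be the multiplication map, `J = ker μ`, and let
`δ = Σ_i u_i ⊗ ε_i ∈ Ann J`, `b = μ δ`.  Then `N_{B/A}(b) = det(P_u) * Disc(ε)`, where
`P_u` has rows the coordinates of the `u_i` in the basis `ε` and
`Disc(ε) = det (Tr_{B/A}(ε_i ε_j))_{i,j}`.  In particular `Disc(ε)` divides `N_{B/A}(b)`
for every `b ∈ μ(Ann J)`. -/
theorem norm_eq_det_mul_discr_of_mem_annihilator
    (A B : Type*) [CommRing A] [CommRing B] [Algebra A B]
    (n : ℕ) (ε : Module.Basis (Fin n) A B) :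
    (∀ u : Fin n → B,
      (∑ i, u i ⊗ₜ[A] ε i) ∈
        (RingHom.ker (Algebra.TensorProduct.lmul' A : B ⊗[A] B →ₐ[A] B)).annihilator →
      Algebra.norm A (Algebra.TensorProduct.lmul' A (∑ i, u i ⊗ₜ[A] ε i))
        = (Matrix.of fun i j => ε.repr (u i) j).det * Algebra.discr A ε) ∧
    ∀ b ∈ Ideal.map (Algebra.TensorProduct.lmul' A : B ⊗[A] B →ₐ[A] B)
        (RingHom.ker (Algebra.TensorProduct.lmul' A : B ⊗[A] B →ₐ[A] B)).annihilator,
      Algebra.discr A ε ∣ Algebra.norm A b := by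
  refine ⟨fun u hu => Algebra.TensorProduct.norm_lmul'_sum_tmul_of_mem_annihilator ε hu,
    fun b hb => ?_⟩
  obtain ⟨δ, hδ, rfl⟩ :=
    (Ideal.mem_map_iff_of_surjective _ Algebra.TensorProduct.lmul'_surjective).mp hb
  rw [← Algebra.TensorProduct.sum_basis_repr_tmul ε δ] at hδ ⊢
  exact Dvd.intro_left _ (Algebra.TensorProduct.norm_lmul'_sum_tmul_of_mem_annihilator ε hδ).symm
end

section
/- Let A be a commutative ring and B an A-algebra that is free of finite rank n as an A-module, μ: B ⊗_A B → B the multiplication map and J = ker μ. If δ = Σ_i x_i ⊗ y_i belongs to Ann(J), then Tr_{(B⊗_A B)/B}(δ) = μ(δ), and consequently μ(δ) = Σ_i x_i y_i = Σ_i x_i · Tr_{B/A}(y_i) = Σ_i y_i · Tr_{B/A}(x_i). -/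
/-!
If `δ` kills the kernel of an augmentation `π : S → R`, then `δ z = π z • δ` for all `z`
(apply the hypothesis to `z - π z ∈ ker π`), so multiplication by `δ` is the rank-one map
`z ↦ π z • δ`, whose trace is `π δ`. For `π = μ` on `B ⊗[A] B` over the left factor, the trace of
`x ⊗ y` is `x Tr_{B/A}(y)` by base change, and swapping the factors preserves both `μ` and `Ann J`.
-/

open TensorProduct

namespace Algebra

variable {R S : Type*} [CommRing R] [CommRing S] [Algebra R S]

theorem trace_eq_of_mem_annihilator_ker [Module.Free R S] [Module.Finite R S] (π : S →ₐ[R] R)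
    {δ : S} (hδ : δ ∈ (RingHom.ker π).annihilator) : trace R S δ = π δ := by
  have hlmul : lmul R S δ = π.toLinearMap.smulRight δ := by
    ext z
    have hz : z - algebraMap R S (π z) ∈ RingHom.ker π := by simp [RingHom.mem_ker]
    have hkill := Submodule.mem_annihilator.mp hδ _ hz
    rw [smul_eq_mul, mul_sub, sub_eq_zero] at hkill
    simp [hkill, Algebra.smul_def, mul_comm]
  rw [trace_apply, hlmul, LinearMap.trace_smulRight, AlgHom.toLinearMap_apply]

theorem trace_tmul [Module.Free R S] [Module.Finite R S] {T : Type*} [CommRing T] [Algebra R T]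
    (t : T) (s : S) : trace T (T ⊗[R] S) (t ⊗ₜ s) = t * algebraMap R T (trace R S s) := by
  have hsplit : t ⊗ₜ[R] s = t • (1 ⊗ₜ s : T ⊗[R] S) := by
    rw [TensorProduct.smul_tmul', smul_eq_mul, mul_one]
  rw [hsplit, map_smul, smul_eq_mul, trace_apply, ← baseChange_lmul, LinearMap.trace_baseChange,
    trace_apply]

end Algebra

namespace Algebra.TensorProduct

variable {R S : Type*} [CommRing R] [CommRing S] [Algebra R S]

theorem lmul'_comm (z : S ⊗[R] S) :
    lmul' R (Algebra.TensorProduct.comm R S S z) = lmul' R z := by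
  induction z using TensorProduct.induction_on with
  | zero => simp
  | tmul a b => simp [mul_comm]
  | add u v hu hv => simp [hu, hv]

theorem comm_mem_annihilator_ker_lmul' {δ : S ⊗[R] S}
    (hδ : δ ∈ (RingHom.ker (lmul' R : S ⊗[R] S →ₐ[R] S)).annihilator) :
    Algebra.TensorProduct.comm R S S δ ∈
      (RingHom.ker (lmul' R : S ⊗[R] S →ₐ[R] S)).annihilator := by
  refine Submodule.mem_annihilator.mpr fun w hw => ?_
  have hw' : (Algebra.TensorProduct.comm R S S).symm w ∈
      RingHom.ker (lmul' R : S ⊗[R] S →ₐ[R] S) := by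
    rwa [RingHom.mem_ker, ← lmul'_comm, AlgEquiv.apply_symm_apply]
  simpa using congrArg (Algebra.TensorProduct.comm R S S) (Submodule.mem_annihilator.mp hδ _ hw')

variable [Module.Free R S] [Module.Finite R S]

theorem trace_eq_lmul'_of_mem_annihilator {δ : S ⊗[R] S}
    (hδ : δ ∈ (RingHom.ker (lmul' R : S ⊗[R] S →ₐ[R] S)).annihilator) :
    Algebra.trace S (S ⊗[R] S) δ = lmul' R δ :=
  Algebra.trace_eq_of_mem_annihilator_ker (lmul'' R) hδ

theorem lmul'_sum_tmul_eq_sum_mul_trace {ι : Type*} [Fintype ι] (x y : ι → S)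
    (hδ : (∑ i, x i ⊗ₜ[R] y i) ∈ (RingHom.ker (lmul' R : S ⊗[R] S →ₐ[R] S)).annihilator) :
    lmul' R (∑ i, x i ⊗ₜ[R] y i) = ∑ i, x i * algebraMap R S (Algebra.trace R S (y i)) := by
  rw [← trace_eq_lmul'_of_mem_annihilator hδ, map_sum]
  exact Finset.sum_congr rfl fun i _ => Algebra.trace_tmul (x i) (y i)

end Algebra.TensorProduct

/-- Let `B` be an `A`-algebra free of finite rank `n` as an `A`-module,
`μ : B ⊗[A] B → B` the multiplication map and `J = ker μ`.  If `δ = Σ_i x_i ⊗ y_i` belongs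
to `Ann J`, then the trace of `δ` for the left `B`-module structure of `B ⊗[A] B` equals
`μ δ`, and consequently `μ δ = Σ_i x_i y_i = Σ_i x_i Tr_{B/A}(y_i) = Σ_i y_i Tr_{B/A}(x_i)`. -/
theorem trace_eq_mul_of_mem_annihilator
    (A B : Type*) [CommRing A] [CommRing B] [Algebra A B]
    (n : ℕ) (ε : Module.Basis (Fin n) A B)
    (m : ℕ) (x y : Fin m → B)
    (hδ : (∑ i, x i ⊗ₜ[A] y i) ∈
      (RingHom.ker (Algebra.TensorProduct.lmul' A : B ⊗[A] B →ₐ[A] B)).annihilator) :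
    Algebra.trace B (B ⊗[A] B) (∑ i, x i ⊗ₜ[A] y i)
        = Algebra.TensorProduct.lmul' A (∑ i, x i ⊗ₜ[A] y i) ∧
      Algebra.TensorProduct.lmul' A (∑ i, x i ⊗ₜ[A] y i) = ∑ i, x i * y i ∧
      Algebra.TensorProduct.lmul' A (∑ i, x i ⊗ₜ[A] y i)
        = ∑ i, x i * algebraMap A B (Algebra.trace A B (y i)) ∧
      Algebra.TensorProduct.lmul' A (∑ i, x i ⊗ₜ[A] y i)
        = ∑ i, y i * algebraMap A B (Algebra.trace A B (x i)) := by
  have : Module.Free A B := .of_basis ε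
  have : Module.Finite A B := .of_basis ε
  have hswap : Algebra.TensorProduct.comm A B B (∑ i, x i ⊗ₜ[A] y i) = ∑ i, y i ⊗ₜ[A] x i := by
    simp
  refine ⟨Algebra.TensorProduct.trace_eq_lmul'_of_mem_annihilator hδ, by simp,
    Algebra.TensorProduct.lmul'_sum_tmul_eq_sum_mul_trace x y hδ, ?_⟩
  rw [← Algebra.TensorProduct.lmul'_comm, hswap]
  exact Algebra.TensorProduct.lmul'_sum_tmul_eq_sum_mul_trace y x
    (hswap ▸ Algebra.TensorProduct.comm_mem_annihilator_ker_lmul' hδ)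
end

section
/- Let A be a commutative ring and B an A-algebra free of rank n with A-basis ε = (ε_1, …, ε_n), with structure constants c_{ij}^{(k)} ∈ A defined by ε_i ε_j = Σ_k c_{ij}^{(k)} ε_k. Let μ: B ⊗_A B → B be the multiplication map and J = ker μ. An element t = u_1 ⊗ ε_1 + ⋯ + u_n ⊗ ε_n of B ⊗_A B (with u_i ∈ B) belongs to Ann(J) if and only if u_i ε_j = Σ_k c_{kj}^{(i)} u_k for all i, j ∈ {1, …, n}. -/
/-!
`J` is spanned, as a left `B`-module, by the elements `1 ⊗ s - s ⊗ 1`, and these depend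
`A`-linearly on `s`; so `t ∈ Ann J` iff `t * (1 ⊗ ε_j) = t * (ε_j ⊗ 1)` for every `j`.
For `t = Σ_k u_k ⊗ ε_k`, expanding `ε_k ε_j = Σ_i c_{kj}^{(i)} ε_i` writes both sides in the
left `B`-basis `(1 ⊗ ε_i)` of `B ⊗ B`, and comparing coefficients gives the equations.
-/

open TensorProduct

section

variable {A B : Type*} [CommRing A] [CommRing B] [Algebra A B]

theorem mem_annihilator_ker_lmul'_iff (t : B ⊗[A] B) :
    t ∈ (RingHom.ker (Algebra.TensorProduct.lmul' A : B ⊗[A] B →ₐ[A] B)).annihilator ↔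
      ∀ s : B, t * (1 ⊗ₜ[A] s - s ⊗ₜ[A] 1) = 0 := by
  change t ∈ (KaehlerDifferential.ideal A B).annihilator ↔ _
  rw [← KaehlerDifferential.span_range_eq_ideal, Ideal.span, Submodule.mem_annihilator_span,
    Set.forall_subtype_range_iff]
  simp only [smul_eq_mul]

theorem mem_annihilator_ker_lmul'_iff_basis {ι : Type*} (ε : Module.Basis ι A B)
    (t : B ⊗[A] B) :
    t ∈ (RingHom.ker (Algebra.TensorProduct.lmul' A : B ⊗[A] B →ₐ[A] B)).annihilator ↔
      ∀ j, t * (1 ⊗ₜ[A] ε j - ε j ⊗ₜ[A] 1) = 0 := by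
  rw [mem_annihilator_ker_lmul'_iff]
  refine ⟨fun h j ↦ h (ε j), fun h s ↦ ?_⟩
  let f : B →ₗ[A] B ⊗[A] B :=
    LinearMap.mulLeft A t ∘ₗ (TensorProduct.mk A B B 1 - (TensorProduct.mk A B B).flip 1)
  exact LinearMap.congr_fun (ε.ext (f₁ := f) (f₂ := 0) h) s

variable {ι : Type*} [Fintype ι]

theorem sum_tmul_basis_eq_equivFun_symm {M : Type*} [AddCommGroup M] [Module A M]
    (ε : Module.Basis ι A M) (v : ι → B) :
    ∑ i, v i ⊗ₜ[A] ε i = (ε.baseChange B).equivFun.symm v := by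
  simp [Module.Basis.baseChange_apply, smul_tmul']

theorem sum_tmul_basis_injective {M : Type*} [AddCommGroup M] [Module A M]
    (ε : Module.Basis ι A M) : Function.Injective fun v : ι → B ↦ ∑ i, v i ⊗ₜ[A] ε i := by
  simpa only [sum_tmul_basis_eq_equivFun_symm] using (ε.baseChange B).equivFun.symm.injective

theorem sum_tmul_basis_mul_one_tmul (ε : Module.Basis ι A B) (u : ι → B) (b : B) :
    (∑ i, u i ⊗ₜ[A] ε i) * (1 ⊗ₜ b) = ∑ i, (∑ k, ε.repr (ε k * b) i • u k) ⊗ₜ[A] ε i := by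
  have expand (k : ι) : u k ⊗ₜ[A] (ε k * b) = ∑ i, (ε.repr (ε k * b) i • u k) ⊗ₜ[A] ε i := by
    conv_lhs => rw [← ε.sum_repr (ε k * b)]
    simp only [tmul_sum, smul_tmul]
  simp only [Finset.sum_mul, Algebra.TensorProduct.tmul_mul_tmul, mul_one, expand, sum_tmul]
  exact Finset.sum_comm

theorem sum_tmul_basis_mul_tmul_one (ε : Module.Basis ι A B) (u : ι → B) (b : B) :
    (∑ i, u i ⊗ₜ[A] ε i) * (b ⊗ₜ 1) = ∑ i, (u i * b) ⊗ₜ[A] ε i := by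
  simp only [Finset.sum_mul, Algebra.TensorProduct.tmul_mul_tmul, mul_one]

end

/-- Let `B` be an `A`-algebra free of rank `n` with basis `ε`, with
structure constants `c_{ij}^{(k)} = ε.repr (ε_i * ε_j) k`, so `ε_i ε_j = Σ_k c_{ij}^{(k)} ε_k`.
Let `μ : B ⊗[A] B → B` be the multiplication map, `J = ker μ`.  An element
`t = Σ_i u_i ⊗ ε_i` of `B ⊗[A] B` belongs to `Ann J` if and only if
`u_i ε_j = Σ_k c_{kj}^{(i)} u_k` for all `i, j`. -/
theorem mem_annihilator_iff_structure_constants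
    (A B : Type*) [CommRing A] [CommRing B] [Algebra A B]
    (n : ℕ) (ε : Module.Basis (Fin n) A B) (u : Fin n → B) :
    (∑ i, u i ⊗ₜ[A] ε i) ∈
        (RingHom.ker (Algebra.TensorProduct.lmul' A : B ⊗[A] B →ₐ[A] B)).annihilator
      ↔ ∀ i j, u i * ε j = ∑ k, ε.repr (ε k * ε j) i • u k := by
  rw [mem_annihilator_ker_lmul'_iff_basis ε, forall_comm]
  refine forall_congr' fun j ↦ ?_
  rw [mul_sub, sub_eq_zero, sum_tmul_basis_mul_one_tmul, sum_tmul_basis_mul_tmul_one,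
    (sum_tmul_basis_injective ε).eq_iff, funext_iff]
  exact forall_congr' fun i ↦ eq_comm
end

section
/- Let A be a commutative ring and B a finitely presented commutative A-algebra. Let μ: B ⊗_A B → B be the multiplication map and J = ker μ. Then J is a finitely presented module over the ring B ⊗_A B. -/
/-!
Present `B ⊗[A] B` as a `B`-algebra by a surjection `φ : B[X₁, …, Xₘ] → B ⊗[A] B` with finitely
generated kernel. Then `μ ∘ φ` is evaluation at a point `b ∈ Bᵐ`, so `φ⁻¹(J)` is the kernel of an
evaluation map. That kernel is finitely presented by induction on `m`: it is the preimage of the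
kernel in one variable fewer under `E[X] → E`, `X ↦ b₀`, whose own kernel `(X - b₀)` is free of
rank one because `X - b₀` is monic. Finite presentation of ideals passes to preimages along
surjections with finitely presented kernel, and to images along surjections with finitely
generated kernel.
-/

open TensorProduct Function Polynomial

namespace Module.FinitePresentation

variable {R S M : Type*} [CommRing R] [CommRing S] [Algebra R S]
  [AddCommGroup M] [Module R M] [Module S M] [IsScalarTower R S M]

lemma of_restrictScalars_of_surjective (hs : Surjective (algebraMap R S))
    [Module.FinitePresentation R M] : Module.FinitePresentation S M :=
  have := CompatibleSMul.of_algebraMap_surjective (M := S) (N := M) hs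
  .of_equiv (lidOfCompatibleSMul R S M)

lemma restrictScalars_of_surjective (hs : Surjective (algebraMap R S))
    (hker : (RingHom.ker (algebraMap R S)).FG) [Module.FinitePresentation S M] :
    Module.FinitePresentation R M :=
  have : Module.FinitePresentation R S :=
    Module.finitePresentation_of_surjective (Algebra.linearMap R S) hs hker
  .trans R M S

end Module.FinitePresentation

def LinearMap.kerSubmoduleComapEquiv {R M N : Type*} [Ring R] [AddCommGroup M] [Module R M]
    [AddCommGroup N] [Module R N] (g : M →ₗ[R] N) (q : Submodule R N) :
    ker (g.submoduleComap q) ≃ₗ[R] ker g :=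
  LinearEquiv.ofEq _ _ (ker_restrict _) ≪≫ₗ
    Submodule.comapSubtypeEquivOfLe fun x hx ↦ by simp [mem_ker.mp hx]

namespace Ideal

variable {R S : Type*} [CommRing R] [CommRing S] {f : R →+* S}

lemma finitePresentation_of_comap (hf : Surjective f) (hker : (RingHom.ker f).FG) (K : Ideal S)
    [Module.FinitePresentation R (K.comap f)] : Module.FinitePresentation S K := by
  let _ := f.toAlgebra
  let π : K.comap f →ₗ[R] K := (Algebra.linearMap R S).submoduleComap (K.restrictScalars R)
  let e : LinearMap.ker π ≃ₗ[R] RingHom.ker f :=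
    (Algebra.linearMap R S).kerSubmoduleComapEquiv (K.restrictScalars R)
  have : Module.Finite R (RingHom.ker f) := Module.Finite.iff_fg.mpr hker
  have : Module.FinitePresentation R K :=
    Module.finitePresentation_of_surjective π
      ((Algebra.linearMap R S).submoduleComap_surjective_of_surjective _ hf)
      (Module.Finite.iff_fg.mp (.equiv e.symm))
  exact .of_restrictScalars_of_surjective hf

lemma finitePresentation_comap (hf : Surjective f) (K : Ideal S)
    [Module.FinitePresentation R (RingHom.ker f)] [Module.FinitePresentation S K] :
    Module.FinitePresentation R (K.comap f) := by
  let _ := f.toAlgebra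
  let π : K.comap f →ₗ[R] K := (Algebra.linearMap R S).submoduleComap (K.restrictScalars R)
  let e : LinearMap.ker π ≃ₗ[R] RingHom.ker f :=
    (Algebra.linearMap R S).kerSubmoduleComapEquiv (K.restrictScalars R)
  have : Module.FinitePresentation R K :=
    .restrictScalars_of_surjective hf (Module.Finite.iff_fg.mp inferInstance)
  have : Module.FinitePresentation R (LinearMap.ker π) := .of_equiv e.symm
  exact Module.finitePresentation_of_ker π
    ((Algebra.linearMap R S).submoduleComap_surjective_of_surjective _ hf)

lemma finitePresentation_span_singleton_of_mem_nonZeroDivisors {t : R}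
    (ht : t ∈ nonZeroDivisors R) : Module.FinitePresentation R (span {t}) :=
  .of_equiv <| (LinearEquiv.ofInjective (LinearMap.toSpanSingleton R R t)
      fun _ _ h ↦ (mul_cancel_right_mem_nonZeroDivisors ht).mp h).trans
    (LinearEquiv.ofEq _ _ (LinearMap.span_singleton_eq_range R R t).symm)

end Ideal

lemma Polynomial.finitePresentation_ker_evalRingHom {R : Type*} [CommRing R] (c : R) :
    Module.FinitePresentation R[X] (RingHom.ker (evalRingHom c)) := by
  rw [ker_evalRingHom]
  exact Ideal.finitePresentation_span_singleton_of_mem_nonZeroDivisors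
    (monic_X_sub_C c).mem_nonZeroDivisors

lemma RingHom.finitePresentation_ker_of_injective {R S : Type*} [CommRing R] [CommRing S]
    {f : R →+* S} (hf : Injective f) : Module.FinitePresentation R (RingHom.ker f) := by
  rw [(injective_iff_ker_eq_bot f).mp hf]
  infer_instance

namespace MvPolynomial

variable {S : Type*} [CommRing S]

lemma ker_eval_eq_comap_finSuccEquiv {n : ℕ} (b : Fin (n + 1) → S) :
    RingHom.ker (eval b) = ((RingHom.ker (eval (Fin.tail b))).comap
      (evalRingHom (C (b 0)))).comap (finSuccEquiv S n).toRingHom := by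
  rw [RingHom.comap_ker, RingHom.comap_ker]
  congr 1
  refine ringHom_ext (fun s ↦ ?_) (Fin.cases ?_ fun j ↦ ?_)
  · simp [finSuccEquiv_apply]
  · simp [finSuccEquiv_X_zero]
  · simp [finSuccEquiv_X_succ, Fin.tail]

lemma finitePresentation_ker_eval {n : ℕ} (b : Fin n → S) :
    Module.FinitePresentation (MvPolynomial (Fin n) S) (RingHom.ker (eval b)) := by
  induction n with
  | zero =>
    exact RingHom.finitePresentation_ker_of_injective
      (coe_aeval_eq_eval b ▸ aeval_injective_iff_of_isEmpty.mpr injective_id)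
  | succ n ih =>
    have := RingHom.finitePresentation_ker_of_injective (f := (finSuccEquiv S n).toRingHom)
      (finSuccEquiv S n).injective
    have := ih (Fin.tail b)
    have := finitePresentation_ker_evalRingHom (C (b 0) : MvPolynomial (Fin n) S)
    have := Ideal.finitePresentation_comap (f := evalRingHom (C (b 0)))
      (fun p ↦ ⟨Polynomial.C p, by simp⟩) (RingHom.ker (eval (Fin.tail b)))
    have := Ideal.finitePresentation_comap (f := (finSuccEquiv S n).toRingHom)
      (finSuccEquiv S n).surjective
      ((RingHom.ker (eval (Fin.tail b))).comap (evalRingHom (C (b 0))))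
    rwa [ker_eval_eq_comap_finSuccEquiv]

end MvPolynomial

/-- Let `B` be a finitely presented commutative `A`-algebra,
`μ : B ⊗[A] B → B` the multiplication map and `J = ker μ`.  Then `J` is a finitely
presented module over the ring `B ⊗[A] B`. -/
theorem ker_mul_finitePresentation
    (A B : Type*) [CommRing A] [CommRing B] [Algebra A B]
    [Algebra.FinitePresentation A B] :
    Module.FinitePresentation (B ⊗[A] B)
      (RingHom.ker (Algebra.TensorProduct.lmul' A : B ⊗[A] B →ₐ[A] B)) := by
  -- `B ⊗[A] B` is finitely presented over `B` as a base change of `B` over `A`.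
  obtain ⟨m, φ, hφ, hker⟩ := Algebra.FinitePresentation.out (R := B) (A := B ⊗[A] B)
  set μ := (Algebra.TensorProduct.lmul' A : B ⊗[A] B →ₐ[A] B)
  have hJ : (RingHom.ker μ).comap φ.toRingHom = RingHom.ker (MvPolynomial.eval (μ ∘ φ ∘ .X)) := by
    refine (RingHom.comap_ker (μ : B ⊗[A] B →+* B) _).trans (congrArg _ ?_)
    exact MvPolynomial.ringHom_ext (fun b ↦ by simp [μ]) fun i ↦ by simp
  have : Module.FinitePresentation _ ((RingHom.ker μ).comap φ.toRingHom) :=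
    hJ ▸ MvPolynomial.finitePresentation_ker_eval _
  exact Ideal.finitePresentation_of_comap hφ hker _
end

section
/- Let A be a commutative ring and B a finitely presented commutative A-algebra, μ: B ⊗_A B → B the multiplication map and J = ker μ. Define the Kähler different D_K(B/A) = F₀(Ω_{B/A}) and the Noether different D_N(B/A) = μ(Ann(J)), both ideals of B. Suppose the finitely presented B-module Ω_{B/A} is generated by m elements. Then one has the inclusions (D_N(B/A))^m ⊆ (Ann_B(Ω_{B/A}))^m ⊆ D_K(B/A) ⊆ D_N(B/A) ⊆ Ann_B(Ω_{B/A}). -/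
/-!
The outer inclusions are formal. Since `Ω[B⁄A] = J/J²`, an element `x ∈ B ⊗ B` acts on it as
`μ x` (because `x - μ x ⊗ 1 ∈ J`), so `x ∈ Ann J` gives `μ x ∈ Ann_B Ω`; and a product
`a₁ ⋯ aₘ` of annihilators is the determinant of the relation matrix `diag(a₁, …, aₘ)`.

For `F₀ ⊆ D_N`, lift the generators of `Ω` to `y₁, …, yₙ ∈ J` and a relation matrix `P` to
`B ⊗ B`. Nakayama (`J` is finitely generated since `B` is of finite type) provides `r ≡ 1 mod J`
with `r J ⊆ (y)`, which turns the relations `P y ≡ 0 mod J²` into exact relations `M y = 0` with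
`M ≡ P mod J`. By the adjugate identity `det M` kills `(y)`, so `det M · r ∈ Ann J`, and
`μ (det M · r) = det P`.
-/

open TensorProduct

open Matrix

theorem Matrix.det_mem_annihilator_span_of_mulVec_eq_zero {ι R : Type*} [Fintype ι]
    [DecidableEq ι] [CommRing R] {M : Matrix ι ι R} {v : ι → R} (h : M *ᵥ v = 0) :
    M.det ∈ (Ideal.span (Set.range v)).annihilator := by
  refine (Submodule.mem_annihilator_span _ _).mpr ?_
  rintro ⟨_, i, rfl⟩
  simpa [adjugate_mul, smul_mulVec] using congr((M.adjugate *ᵥ $h) i)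

theorem Ideal.pow_le_of_forall_prod_mem {R : Type*} [CommRing R] {I T : Ideal R} {m : ℕ}
    (h : ∀ a : Fin m → R, (∀ i, a i ∈ I) → ∏ i, a i ∈ T) : I ^ m ≤ T := by
  rw [Submodule.pow_eq_span_pow_set, Submodule.span_le]
  intro x hx
  obtain ⟨a, rfl⟩ := Set.mem_pow.mp hx
  rw [List.prod_ofFn]
  exact h _ fun i => (a i).2

namespace Ideal

variable {R ι : Type*} [CommRing R] [Fintype ι] [DecidableEq ι] {J : Ideal R}

theorem exists_mem_annihilator_sub_det_mem (hJ : J.FG) (y : ι → R)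
    (hy : J ≤ span (Set.range y) ⊔ J ^ 2) (P : Matrix ι ι R) (hP : ∀ i, (P *ᵥ y) i ∈ J ^ 2) :
    ∃ d ∈ J.annihilator, d - P.det ∈ J := by
  rw [pow_two, ← Ideal.smul_eq_mul] at hy hP
  obtain ⟨r, hr1, hrJ⟩ := Submodule.exists_sub_one_mem_and_smul_le_of_fg_of_le_sup hJ le_rfl hy
  have hQ : ∀ i, ∃ Q : ι → R, (∀ j, Q j ∈ J) ∧ ∑ j, Q j * y j = r * (P *ᵥ y) i := by
    intro i
    have hmem : r * (P *ᵥ y) i ∈ J • span (Set.range y) := by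
      refine Submodule.smul_induction_on (hP i) (fun a ha b hb => ?_) fun _ _ h₁ h₂ => ?_
      · change r * (a * b) ∈ _
        rw [mul_left_comm]
        exact mul_mem_mul ha (hrJ (Submodule.smul_mem_pointwise_smul b r J hb))
      · rw [mul_add]; exact add_mem h₁ h₂
    obtain ⟨a, ha, hsum⟩ := (Submodule.mem_ideal_smul_span_iff_exists_sum J y _).mp hmem
    exact ⟨a, ha, by
      rw [← hsum, Finsupp.sum_fintype a (fun i c => c • y i) fun i => zero_smul R (y i)]; rfl⟩
  choose Q hQJ hQy using hQ
  set M : Matrix ι ι R := r • P - Matrix.of Q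
  have hMy : M *ᵥ y = 0 := by
    ext i
    rw [sub_mulVec, smul_mulVec, Pi.sub_apply, Pi.smul_apply, _root_.smul_eq_mul, ← hQy i,
      Pi.zero_apply, sub_eq_zero]
    rfl
  refine ⟨M.det * r, Submodule.mem_annihilator.mpr fun x hx => ?_, ?_⟩
  · rw [mul_smul]
    exact Submodule.mem_annihilator.mp (det_mem_annihilator_span_of_mulVec_eq_zero hMy) _
      (hrJ (Submodule.smul_mem_pointwise_smul x r J hx))
  · have hr : Quotient.mk J r = 1 :=
      map_one (Quotient.mk J) ▸ (Quotient.mk_eq_mk_iff_sub_mem r 1).mpr hr1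
    have hM : (Quotient.mk J).mapMatrix M = (Quotient.mk J).mapMatrix P := by
      ext i j
      simp [M, hr, Quotient.eq_zero_iff_mem.mpr (hQJ i j)]
    rw [← Quotient.eq_zero_iff_mem, map_sub, map_mul, hr, mul_one, RingHom.map_det,
      RingHom.map_det, hM, sub_self]

end Ideal

section Fitting

variable {R M : Type*} [CommRing R] [AddCommGroup M] [Module R M]

theorem det_mem_fittingIdeal0 {n : ℕ} {f : (Fin n → R) →ₗ[R] M} (hf : Function.Surjective f)
    {P : Matrix (Fin n) (Fin n) R} (hP : ∀ i, P i ∈ LinearMap.ker f) :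
    P.det ∈ fittingIdeal0 R M :=
  Submodule.mem_iSup_of_mem n <| Submodule.mem_iSup_of_mem f <| Submodule.mem_iSup_of_mem hf <|
    Ideal.subset_span ⟨P, hP, rfl⟩

theorem fittingIdeal0_le_of_forall_det_mem {I : Ideal R}
    (h : ∀ (n : ℕ) (f : (Fin n → R) →ₗ[R] M), Function.Surjective f →
      ∀ P : Matrix (Fin n) (Fin n) R, (∀ i, P i ∈ LinearMap.ker f) → P.det ∈ I) :
    fittingIdeal0 R M ≤ I :=
  iSup_le fun n => iSup_le fun f => iSup_le fun hf => Ideal.span_le.mpr <| by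
    rintro _ ⟨P, hP, rfl⟩
    exact h n f hf P hP

theorem annihilator_pow_le_fittingIdeal0 {m : ℕ} {s : Fin m → M}
    (hs : Submodule.span R (Set.range s) = ⊤) :
    Module.annihilator R M ^ m ≤ fittingIdeal0 R M := by
  classical
  have hf : Function.Surjective (Fintype.linearCombination R s) := by
    rw [← LinearMap.range_eq_top, Fintype.range_linearCombination, hs]
  refine Ideal.pow_le_of_forall_prod_mem fun a ha => ?_
  rw [← det_diagonal]
  refine det_mem_fittingIdeal0 hf fun i => ?_
  change Fintype.linearCombination R s ((diagonal a).row i) = 0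
  rw [row_diagonal, Fintype.linearCombination_apply_single,
    Module.mem_annihilator.mp (ha i)]

end Fitting

namespace KaehlerDifferential

variable {A B : Type*} [CommRing A] [CommRing B] [Algebra A B]

theorem smul_eq_lmul'_smul (c : B ⊗[A] B) (ω : Ω[B⁄A]) :
    c • ω = Algebra.TensorProduct.lmul' A c • ω := by
  have hc : c - algebraMap B (B ⊗[A] B) (Algebra.TensorProduct.lmul' A c) ∈ ideal A B := by
    simp [RingHom.mem_ker]
  rw [← algebraMap_smul (B ⊗[A] B) (Algebra.TensorProduct.lmul' A c) ω, ← sub_eq_zero,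
    ← sub_smul]
  exact Ideal.Cotangent.smul_eq_zero_of_mem hc ω

theorem map_annihilator_ideal_le_annihilator :
    (ideal A B).annihilator.map (Algebra.TensorProduct.lmul' A : B ⊗[A] B →ₐ[A] B)
      ≤ Module.annihilator B Ω[B⁄A] := by
  rw [Ideal.map_le_iff_le_comap]
  intro x hx
  rw [Ideal.mem_comap, Module.mem_annihilator]
  intro ω
  obtain ⟨j, rfl⟩ := fromIdeal_surjective A B ω
  have hxj : x • j = 0 := Subtype.ext (Submodule.mem_annihilator.mp hx j j.2)
  rw [← smul_eq_lmul'_smul, ← map_smul, hxj, map_zero]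

theorem fromIdeal_sum_algebraMap_smul {ι : Type*} [Fintype ι] [DecidableEq ι]
    {f : (ι → B) →ₗ[B] Ω[B⁄A]} {y : ι → ideal A B}
    (hy : ∀ j, fromIdeal A B (y j) = f (Pi.single j 1)) (p : ι → B) :
    fromIdeal A B (∑ j, algebraMap B (B ⊗[A] B) (p j) • y j) = f p := by
  conv_rhs => rw [← Finset.univ_sum_single p]
  simp only [map_sum, map_smul, hy]
  refine Finset.sum_congr rfl fun j _ => ?_
  rw [algebraMap_smul, ← map_smul, ← Pi.single_smul, smul_eq_mul, mul_one]

theorem det_mem_map_annihilator_ideal [Algebra.EssFiniteType A B] {n : ℕ}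
    {f : (Fin n → B) →ₗ[B] Ω[B⁄A]} (hf : Function.Surjective f)
    {P : Matrix (Fin n) (Fin n) B} (hP : ∀ i, P i ∈ LinearMap.ker f) :
    P.det ∈ (ideal A B).annihilator.map (Algebra.TensorProduct.lmul' A : B ⊗[A] B →ₐ[A] B) := by
  choose y hy using fun j => fromIdeal_surjective A B (f (Pi.single j 1))
  have hgen : ideal A B ≤ Ideal.span (Set.range fun j => (y j : B ⊗[A] B)) ⊔ ideal A B ^ 2 := by
    intro x hx
    obtain ⟨p, hp⟩ := hf (fromIdeal A B ⟨x, hx⟩)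
    have hx2 := (Ideal.toCotangent_eq _).mp ((fromIdeal_sum_algebraMap_smul hy p).trans hp)
    refine Submodule.mem_sup.mpr ⟨_, ?_, _, neg_mem hx2, by rw [neg_sub, add_sub_cancel]⟩
    rw [Submodule.coe_sum]
    exact Ideal.sum_mem _ fun j _ => Ideal.mul_mem_left _ _ (Ideal.subset_span ⟨j, rfl⟩)
  have hrel : ∀ i, (P.map (algebraMap B (B ⊗[A] B)) *ᵥ fun j => (y j : B ⊗[A] B)) i
      ∈ ideal A B ^ 2 := by
    intro i
    have hsq := (Ideal.toCotangent_eq_zero _ _).mp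
      ((fromIdeal_sum_algebraMap_smul hy (P i)).trans (hP i))
    simpa [mulVec, dotProduct] using hsq
  obtain ⟨d, hd, hdP⟩ := Ideal.exists_mem_annihilator_sub_det_mem (ideal_fg A B) _ hgen _ hrel
  have hdet : Algebra.TensorProduct.lmul' A d = P.det := by
    rw [RingHom.mem_ker, map_sub, sub_eq_zero, AlgHom.map_det] at hdP
    rw [hdP]
    congr
    ext i j
    simp
  exact hdet ▸ Ideal.mem_map_of_mem _ hd

end KaehlerDifferential

/-- Let `B` be a finitely presented commutative `A`-algebra,
`μ : B ⊗[A] B → B` the multiplication map and `J = ker μ`.  Set `D_K(B/A) = F₀(Ω[B⁄A])`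
(the Kähler different) and `D_N(B/A) = μ(Ann J)` (the Noether different).  If the finitely
presented `B`-module `Ω[B⁄A]` is generated by `m` elements, then
`D_N^m ⊆ (Ann_B Ω[B⁄A])^m ⊆ D_K ⊆ D_N ⊆ Ann_B Ω[B⁄A]`. -/
theorem differents_inclusions
    (A B : Type*) [CommRing A] [CommRing B] [Algebra A B]
    [Algebra.FinitePresentation A B]
    (m : ℕ) (s : Fin m → Ω[B⁄A]) (hs : Submodule.span B (Set.range s) = ⊤) :
    (Ideal.map (Algebra.TensorProduct.lmul' A : B ⊗[A] B →ₐ[A] B)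
          (RingHom.ker (Algebra.TensorProduct.lmul' A : B ⊗[A] B →ₐ[A] B)).annihilator) ^ m
        ≤ (Module.annihilator B (Ω[B⁄A])) ^ m ∧
      (Module.annihilator B (Ω[B⁄A])) ^ m ≤ fittingIdeal0 B (Ω[B⁄A]) ∧
      fittingIdeal0 B (Ω[B⁄A])
        ≤ Ideal.map (Algebra.TensorProduct.lmul' A : B ⊗[A] B →ₐ[A] B)
            (RingHom.ker (Algebra.TensorProduct.lmul' A : B ⊗[A] B →ₐ[A] B)).annihilator ∧
      Ideal.map (Algebra.TensorProduct.lmul' A : B ⊗[A] B →ₐ[A] B)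
          (RingHom.ker (Algebra.TensorProduct.lmul' A : B ⊗[A] B →ₐ[A] B)).annihilator
        ≤ Module.annihilator B (Ω[B⁄A]) := by
  have hNoether := KaehlerDifferential.map_annihilator_ideal_le_annihilator (A := A) (B := B)
  exact ⟨Ideal.pow_right_mono hNoether m, annihilator_pow_le_fittingIdeal0 hs,
    fittingIdeal0_le_of_forall_det_mem fun _ _ hf _ hP =>
      KaehlerDifferential.det_mem_map_annihilator_ideal hf hP, hNoether⟩
end

section
/- Let A be a commutative ring and B a finitely presented commutative A-algebra such that the B-module of Kähler differentials Ω_{B/A} is generated by a single element (for instance when B is generated by one element as an A-algebra). Then the Kähler different, the Noether different and the annihilator of Ω_{B/A} coincide: F₀(Ω_{B/A}) = μ(Ann(J)) = Ann_B(Ω_{B/A}). -/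
open TensorProduct

/-!
Write `J = ker μ`, so that `Ω[B⁄A] = J/J²`, on which `B ⊗[A] B` acts through `μ`; hence
`Ann_B Ω = μ(Ann_{B⊗B}(J/J²))`. Always `Ann J ⊆ Ann(J/J²)` and `F₀ ⊆ Ann`, and for a cyclic
module `F₀ = Ann`. Conversely, `J` is finitely generated and `J = (x) + J²`, so by Nakayama some
`δ ≡ 1 mod J` has `δJ ⊆ (x)`. If `a` kills `J/J²` then `δ²ax ∈ δ²J² ⊆ (x²)`, say `δ²ax = cx²`;
then `δ(δ²a - cx)` kills `J` and is `≡ a mod J`. So `Ann(J/J²) ⊆ Ann J + J`, and `μ` kills `J`.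
-/

open Matrix in
theorem fittingIdeal0_le_annihilator (R M : Type*) [CommRing R] [AddCommGroup M] [Module R M] :
    fittingIdeal0 R M ≤ Module.annihilator R M := by
  refine iSup_le fun n => iSup_le fun f => iSup_le fun hf => Ideal.span_le.2 ?_
  rintro _ ⟨P, hP, rfl⟩
  refine Module.mem_annihilator.2 fun m => ?_
  obtain ⟨v, rfl⟩ := hf m
  have hrows : ∀ u : Fin n → R, f (u ᵥ* P) = 0 := fun u => by
    simp [Matrix.vecMul_eq_sum, map_sum, LinearMap.mem_ker.1 (hP _)]
  -- Cramer's rule: `det P • v = (v ᵥ* adj P) ᵥ* P` is a combination of the relations.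
  calc P.det • f v = f ((v ᵥ* P.adjugate) ᵥ* P) := by
        rw [Matrix.vecMul_vecMul, Matrix.adjugate_mul, Matrix.vecMul_smul, Matrix.vecMul_one,
          map_smul]
    _ = 0 := hrows _

theorem annihilator_le_fittingIdeal0_of_span_singleton_eq_top {R M : Type*} [CommRing R]
    [AddCommGroup M] [Module R M] {g : M} (hg : Submodule.span R {g} = ⊤) :
    Module.annihilator R M ≤ fittingIdeal0 R M := by
  intro a ha
  let f : (Fin 1 → R) →ₗ[R] M := (LinearMap.proj 0).smulRight g
  have hf : Function.Surjective f := fun m => by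
    obtain ⟨b, hb⟩ := Submodule.mem_span_singleton.1 (hg ▸ Submodule.mem_top : m ∈ _)
    exact ⟨fun _ => b, hb⟩
  refine Submodule.mem_iSup_of_mem 1 <| Submodule.mem_iSup_of_mem f <|
    Submodule.mem_iSup_of_mem hf ?_
  refine Ideal.subset_span ⟨Matrix.of fun _ _ => a, fun _ => ?_, by simp⟩
  simpa [f] using Module.mem_annihilator.1 ha g

namespace Ideal

variable {R : Type*} [CommRing R] (I : Ideal R)

theorem annihilator_le_annihilator_cotangent :
    I.annihilator ≤ Module.annihilator R I.Cotangent := by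
  refine fun r hr => Module.mem_annihilator.2 fun m => ?_
  obtain ⟨x, rfl⟩ := I.toCotangent_surjective m
  have hrx : r * x = 0 := Submodule.mem_annihilator.1 hr x x.2
  rw [← map_smul, Ideal.toCotangent_eq_zero, Submodule.coe_smul, smul_eq_mul, hrx]
  exact zero_mem _

open Pointwise in
theorem annihilator_cotangent_le_annihilator_sup (hI : I.FG) {g : I.Cotangent}
    (hg : Submodule.span R {g} = ⊤) :
    Module.annihilator R I.Cotangent ≤ I.annihilator ⊔ I := by
  intro a ha
  obtain ⟨x, rfl⟩ := I.toCotangent_surjective g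
  have hI_le : I ≤ span {(x : R)} ⊔ I • I := by
    intro y hy
    obtain ⟨c, hc⟩ := Submodule.mem_span_singleton.1
      (hg ▸ Submodule.mem_top : I.toCotangent ⟨y, hy⟩ ∈ _)
    rw [← map_smul, toCotangent_eq, pow_two] at hc
    exact Submodule.mem_sup.2 ⟨c * x, mem_span_singleton'.2 ⟨c, rfl⟩, y - c * x,
      by simpa using neg_mem hc, by ring⟩
  obtain ⟨δ, hδ, hδI⟩ := Submodule.exists_sub_one_mem_and_smul_le_of_fg_of_le_sup hI le_rfl hI_le
  have hδy : ∀ y ∈ I, δ * y ∈ span {(x : R)} := fun y hy =>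
    hδI (Submodule.smul_mem_pointwise_smul y δ I hy)
  have hax : a * x ∈ I ^ 2 := by
    have := Module.mem_annihilator.1 ha (I.toCotangent x)
    rwa [← map_smul, toCotangent_eq_zero] at this
  have hδ2ax : δ ^ 2 * (a * x) ∈ span {(x : R) ^ 2} := by
    have hle : span {δ} * I ≤ span {(x : R)} := by
      rwa [← smul_eq_mul, Submodule.ideal_span_singleton_smul]
    have hle2 : span {δ ^ 2} * I ^ 2 ≤ span {(x : R) ^ 2} := by
      rw [← span_singleton_pow, ← span_singleton_pow, ← mul_pow]
      exact pow_right_mono hle 2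
    exact hle2 (mul_mem_mul (mem_span_singleton_self _) hax)
  obtain ⟨c, hc⟩ := mem_span_singleton'.1 hδ2ax
  have hσ : δ * (δ ^ 2 * a - c * x) ∈ I.annihilator := by
    refine Submodule.mem_annihilator.2 fun y hy => ?_
    obtain ⟨d, hd⟩ := mem_span_singleton'.1 (hδy y hy)
    rw [smul_eq_mul]
    linear_combination (δ ^ 2 * a - c * x) * hd.symm - d * hc
  have hσa : a - δ * (δ ^ 2 * a - c * x) ∈ I := by
    have : a - δ * (δ ^ 2 * a - c * x) = -((δ - 1) * ((δ ^ 2 + δ + 1) * a)) + δ * c * x := by ring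
    rw [this]
    exact add_mem (neg_mem (mul_mem_right _ _ hδ)) (mul_mem_left _ _ x.2)
  exact Submodule.mem_sup.2 ⟨_, hσ, _, hσa, by ring⟩

end Ideal

namespace KaehlerDifferential

open Algebra.TensorProduct

variable {A B : Type*} [CommRing A] [CommRing B] [Algebra A B]

theorem lmul'_smul (c : B ⊗[A] B) (ω : Ω[B⁄A]) : lmul' A c • ω = c • ω := by
  have hmem : algebraMap B (B ⊗[A] B) (lmul' A c) - c ∈ ideal A B := by
    simp [ideal, RingHom.mem_ker, Algebra.TensorProduct.algebraMap_apply]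
  rw [← algebraMap_smul (B ⊗[A] B), ← sub_eq_zero, ← sub_smul]
  exact Ideal.Cotangent.smul_eq_zero_of_mem hmem ω

theorem map_lmul'_annihilator :
    (Module.annihilator (B ⊗[A] B) Ω[B⁄A]).map (lmul' A : B ⊗[A] B →ₐ[A] B) =
      Module.annihilator B Ω[B⁄A] := by
  have hcomap : Module.annihilator (B ⊗[A] B) Ω[B⁄A] =
      (Module.annihilator B Ω[B⁄A]).comap (lmul' A : B ⊗[A] B →ₐ[A] B) := by
    ext c
    simp only [Ideal.mem_comap, Module.mem_annihilator, lmul'_smul]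
  rw [hcomap, Ideal.map_comap_of_surjective _ fun b => ⟨b ⊗ₜ 1, by simp⟩]

end KaehlerDifferential

/-- Let `B` be a finitely presented commutative `A`-algebra such that
`Ω[B⁄A]` is generated by a single element.  Then the Kähler different `F₀(Ω[B⁄A])`, the
Noether different `μ(Ann J)` and the annihilator `Ann_B(Ω[B⁄A])` coincide. -/
theorem differents_eq_of_span_singleton
    (A B : Type*) [CommRing A] [CommRing B] [Algebra A B]
    [Algebra.FinitePresentation A B]
    (g : Ω[B⁄A]) (hg : Submodule.span B {g} = ⊤) :
    fittingIdeal0 B (Ω[B⁄A])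
        = Ideal.map (Algebra.TensorProduct.lmul' A : B ⊗[A] B →ₐ[A] B)
            (RingHom.ker (Algebra.TensorProduct.lmul' A : B ⊗[A] B →ₐ[A] B)).annihilator ∧
      Ideal.map (Algebra.TensorProduct.lmul' A : B ⊗[A] B →ₐ[A] B)
          (RingHom.ker (Algebra.TensorProduct.lmul' A : B ⊗[A] B →ₐ[A] B)).annihilator
        = Module.annihilator B (Ω[B⁄A]) := by
  set μ : B ⊗[A] B →ₐ[A] B := Algebra.TensorProduct.lmul' A
  have hg' : Submodule.span (B ⊗[A] B) {g} = ⊤ := by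
    rw [← Submodule.span_span_of_tower B, hg, Submodule.top_coe, Submodule.span_univ]
  have noether_le : (RingHom.ker μ).annihilator.map μ ≤ Module.annihilator B Ω[B⁄A] := by
    rw [← KaehlerDifferential.map_lmul'_annihilator]
    exact Ideal.map_mono (Ideal.annihilator_le_annihilator_cotangent _)
  have le_noether : Module.annihilator B Ω[B⁄A] ≤ (RingHom.ker μ).annihilator.map μ := by
    rw [← KaehlerDifferential.map_lmul'_annihilator]
    refine (Ideal.map_mono (Ideal.annihilator_cotangent_le_annihilator_sup _
      (KaehlerDifferential.ideal_fg A B) hg')).trans ?_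
    rw [Ideal.map_sup, (Ideal.map_eq_bot_iff_le_ker _).2 le_rfl, sup_bot_eq]
  have noether_eq := le_antisymm noether_le le_noether
  refine ⟨le_antisymm ?_ ?_, noether_eq⟩
  · exact noether_eq ▸ fittingIdeal0_le_annihilator B Ω[B⁄A]
  · exact noether_eq ▸ annihilator_le_fittingIdeal0_of_span_singleton_eq_top hg
end

section
/- Let A be a commutative ring, n ≥ 3, and B = A[X_1, …, X_n]/I where I is the ideal generated by the polynomials X_i² − X_j² (for i < j) and X_i X_j (for i < j). Then the Kähler different vanishes: F₀(Ω_{B/A}) = 0. Consequently, if A is a field whose characteristic does not divide n + 2, the inclusion D_K(B/A) ⊆ D_N(B/A) is strict, since the nonzero element (n + 2)x_1² lies in D_N(B/A) but not in D_K(B/A) = 0. -/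
open TensorProduct MvPolynomial

/-!
`Ω[B⁄A]` is generated by `dx₁, …, dxₙ`, and in every relation `∑ vᵢ dxᵢ = 0` all `vᵢ` lie in
`𝔪 = (x₁, …, xₙ)`: since the relations of `B` are quadratic, `xⱼ ↦ εⱼ` defines an algebra map
into the dual numbers `A[ε₁, …, εₙ]`, whose `ε`-part is the derivation `∂/∂xⱼ` at the origin.
Comparing an arbitrary presentation of `Ω[B⁄A]` with this generating set puts every relation
determinant in `𝔪ⁿ ⊆ 𝔪³ = 0`.

`B` is the apolar algebra of the quadric `∑ Yᵢ²`: a Frobenius algebra with basis `1, xᵢ, s = x₁²`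
and dual basis `s, xᵢ, 1`. The element `∑ xᵢ ⊗ xᵢ + s ⊗ 1 + 1 ⊗ s` of `B ⊗ B` annihilates every
`1 ⊗ b - b ⊗ 1` and multiplies out to `(n + 2) s`, which is nonzero once `n + 2 ≠ 0` in `A`: the
functional "sum of the coefficients of the `Xᵢ²`" kills the ideal of relations.
-/

theorem Matrix.det_mem_pow_of_forall_inl_mem {R ι κ : Type*} [CommRing R] [Fintype ι]
    [Fintype κ] [DecidableEq ι] [DecidableEq κ] {I : Ideal R} (M : Matrix (ι ⊕ κ) (ι ⊕ κ) R)
    (hM : ∀ r i, M r (Sum.inl i) ∈ I) : M.det ∈ I ^ Fintype.card ι := by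
  rw [Matrix.det_apply]
  refine Ideal.sum_mem _ fun σ _ => ?_
  rw [Fintype.prod_sum_type]
  refine Submodule.smul_of_tower_mem _ _ (Ideal.mul_mem_right _ _ ?_)
  simpa [Finset.prod_const] using
    Ideal.prod_mem_prod (s := Finset.univ) (I := fun _ => I) fun i _ => hM (σ (Sum.inl i)) i

theorem det_mem_pow_of_rows_mem_ker {R M ι κ : Type*} [CommRing R] [AddCommGroup M]
    [Module R M] [Fintype ι] [Fintype κ] [DecidableEq κ] {g : ι → M}
    (hg : Submodule.span R (Set.range g) = ⊤) {I : Ideal R}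
    (hI : ∀ v : ι → R, ∑ i, v i • g i = 0 → ∀ i, v i ∈ I)
    {f : (κ → R) →ₗ[R] M} (hf : Function.Surjective f) {P : Matrix κ κ R}
    (hP : ∀ k, P k ∈ LinearMap.ker f) : P.det ∈ I ^ Fintype.card ι := by
  classical
  obtain ⟨C, hC⟩ : ∃ C : Matrix ι κ R, ∀ i, f (C i) = g i :=
    ⟨_, fun i => (hf (g i)).choose_spec⟩
  obtain ⟨G, hG⟩ : ∃ G : Matrix κ ι R, ∀ k, ∑ i, G k i • g i = f (Pi.single k 1) :=
    ⟨_, fun k => ((Submodule.mem_span_range_iff_exists_fun R).1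
      (hg ▸ Submodule.mem_top : f (Pi.single k 1) ∈ _)).choose_spec⟩
  have hf_apply : ∀ w, f w = ∑ i, (∑ k, w k * G k i) • g i := by
    intro w
    conv_lhs => rw [← (Pi.basisFun R κ).sum_repr w]
    simp only [map_sum, map_smul, Pi.basisFun_apply, Pi.basisFun_repr, ← hG, Finset.smul_sum,
      smul_smul, Finset.sum_smul]
    exact Finset.sum_comm
  -- `[[1, -C], [0, P]]` has determinant `det P`; right multiplication by the unimodular
  -- `[[1, 0], [G, 1]]` turns its first columns into coefficients of relations among the `g i`.
  have hdet : P.det = (Matrix.fromBlocks 1 (-C) 0 P * Matrix.fromBlocks 1 0 G 1).det := by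
    rw [Matrix.det_mul, Matrix.det_fromBlocks_zero₂₁, Matrix.det_fromBlocks_zero₁₂]; simp
  rw [hdet, Matrix.fromBlocks_multiply]
  refine Matrix.det_mem_pow_of_forall_inl_mem _ ?_
  rintro (j | k) i
  · have := hI (fun i => ((1 : Matrix ι ι R) - C * G) j i) ?_ i
    · simpa [sub_eq_add_neg] using this
    simp [sub_smul, Finset.sum_sub_distrib, Matrix.one_apply, Matrix.mul_apply, ← hf_apply, hC]
  · have := hI (fun i => (P * G) k i) ?_ i
    · simpa using this
    simpa [Matrix.mul_apply, ← hf_apply] using hP k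

theorem fittingIdeal0_le_pow {R M ι : Type*} [CommRing R] [AddCommGroup M] [Module R M]
    [Fintype ι] {g : ι → M} (hg : Submodule.span R (Set.range g) = ⊤) {I : Ideal R}
    (hI : ∀ v : ι → R, ∑ i, v i • g i = 0 → ∀ i, v i ∈ I) :
    fittingIdeal0 R M ≤ I ^ Fintype.card ι :=
  iSup_le fun _ => iSup_le fun _ => iSup_le fun hf => Ideal.span_le.2 <| by
    rintro _ ⟨P, hP, rfl⟩
    exact det_mem_pow_of_rows_mem_ker hg hI hf hP

def Derivation.sndOfAlgHom {R S M : Type*} [CommRing R] [CommRing S] [Algebra R S]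
    [AddCommGroup M] [Module R M] [Module Rᵐᵒᵖ M] [IsCentralScalar R M] [Module S M]
    (Ψ : S →ₐ[R] TrivSqZeroExt R M) (hsmul : ∀ (s : S) (m : M), s • m = (Ψ s).fst • m) :
    Derivation R S M :=
  Derivation.mk' ((TrivSqZeroExt.sndHom R M).comp Ψ.toLinearMap) fun a b => by
    simp [TrivSqZeroExt.snd_mul, hsmul, add_comm]

theorem KaehlerDifferential.span_D_image_eq_top {R S : Type*} [CommRing R] [CommRing S]
    [Algebra R S] {s : Set S} (hs : Algebra.adjoin R s = ⊤) :
    Submodule.span S (KaehlerDifferential.D R S '' s) = ⊤ := by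
  rw [eq_top_iff, ← KaehlerDifferential.span_range_derivation, Submodule.span_le]
  rintro _ ⟨y, rfl⟩
  have hy : y ∈ Algebra.adjoin R s := hs ▸ Algebra.mem_top
  induction hy using Algebra.adjoin_induction with
  | mem y hy => exact Submodule.subset_span ⟨y, hy, rfl⟩
  | algebraMap r => simp
  | add y z _ _ hy hz => rw [map_add]; exact add_mem hy hz
  | mul y z _ _ hy hz =>
    rw [Derivation.leibniz]
    exact add_mem (Submodule.smul_mem _ _ hz) (Submodule.smul_mem _ _ hy)

theorem mem_annihilator_ker_lmul'_of_adjoin_eq_top {R S : Type*} [CommRing R] [CommRing S]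
    [Algebra R S] {s : Set S} (hs : Algebra.adjoin R s = ⊤) {t : S ⊗[R] S}
    (ht : ∀ y ∈ s, t * (1 ⊗ₜ y - y ⊗ₜ 1) = 0) :
    t ∈ (RingHom.ker (Algebra.TensorProduct.lmul' R : S ⊗[R] S →ₐ[R] S)).annihilator := by
  rw [← KaehlerDifferential.ideal, ← KaehlerDifferential.span_range_eq_ideal,
    Submodule.mem_annihilator_span]
  rintro ⟨_, y, rfl⟩
  change t * ((1 : S) ⊗ₜ[R] y - y ⊗ₜ[R] 1) = 0
  have hy : y ∈ Algebra.adjoin R s := hs ▸ Algebra.mem_top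
  induction hy using Algebra.adjoin_induction with
  | mem y hy => exact ht y hy
  | algebraMap r =>
    rw [Algebra.algebraMap_eq_smul_one, tmul_smul, smul_tmul', sub_self, mul_zero]
  | add y z _ _ hy hz => rw [tmul_add, add_tmul, add_sub_add_comm, mul_add, hy, hz, add_zero]
  | mul y z _ _ hy hz =>
    have : (1 : S) ⊗ₜ[R] (y * z) - (y * z) ⊗ₜ[R] 1 =
        (1 ⊗ₜ y) * (1 ⊗ₜ z - z ⊗ₜ 1) + (z ⊗ₜ 1) * (1 ⊗ₜ y - y ⊗ₜ 1) := by
      simp only [mul_sub, Algebra.TensorProduct.tmul_mul_tmul, one_mul, mul_one, mul_comm z y]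
      abel
    rw [this, mul_add, mul_left_comm, hz, mul_left_comm, hy, mul_zero, mul_zero, add_zero]

theorem MvPolynomial.IsHomogeneous.coeff_mul_left {σ R : Type*} [CommSemiring R]
    {g : MvPolynomial σ R} {d : σ →₀ ℕ} (hg : g.IsHomogeneous d.degree) (r : MvPolynomial σ R) :
    coeff d (r * g) = constantCoeff r * coeff d g := by
  classical
  rw [coeff_mul, Finset.sum_eq_single (0, d) _ (by simp)]
  · rfl
  rintro ⟨u, v⟩ huv hne
  rw [Finset.HasAntidiagonal.mem_antidiagonal] at huv
  dsimp only at huv ⊢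
  by_cases hv : coeff v g = 0
  · rw [hv, mul_zero]
  have hdeg : v.degree = d.degree := by_contra fun h => hv (hg.coeff_eq_zero h)
  have hu : u = 0 := by
    rw [← Finsupp.degree_eq_zero_iff]
    have := congrArg Finsupp.degree huv
    rw [map_add] at this
    omega
  subst hu
  rw [zero_add] at huv
  exact absurd (by rw [huv]) hne

theorem MvPolynomial.coeff_single_two_X_mul_X {σ R : Type*} [CommSemiring R] {i j : σ}
    (hij : i ≠ j) (k : σ) : coeff (Finsupp.single k 2) (X i * X j : MvPolynomial σ R) = 0 := by
  classical
  rw [X, X, monomial_mul, coeff_monomial, if_neg]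
  intro h
  have hi := congrArg (· i) h
  have hj := congrArg (· j) h
  simp [Finsupp.single_apply, hij, hij.symm] at hi hj
  grind

theorem sum_tmul_add_mul_one_tmul_sub_eq_zero {R S ι : Type*} [CommRing R] [CommRing S]
    [Algebra R S] [Fintype ι] [DecidableEq ι] {x : ι → S} {s : S}
    (hx : ∀ i j, x i * x j = if i = j then s else 0) (hs : ∀ k, s * x k = 0) (k : ι) :
    (∑ i, x i ⊗ₜ[R] x i + s ⊗ₜ 1 + 1 ⊗ₜ s) * (1 ⊗ₜ x k - x k ⊗ₜ 1) = 0 := by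
  simp [mul_sub, add_mul, Finset.sum_mul, Algebra.TensorProduct.tmul_mul_tmul, hx, hs,
    ite_tmul, tmul_ite]
  abel

namespace ApolarQuadric

noncomputable section

variable (n : ℕ) (A : Type*) [CommRing A]

def relations : Set (MvPolynomial (Fin n) A) :=
  { p | ∃ i j : Fin n, i < j ∧ p = X i ^ 2 - X j ^ 2 } ∪
    { p | ∃ i j : Fin n, i < j ∧ p = X i * X j }

abbrev ideal : Ideal (MvPolynomial (Fin n) A) := Ideal.span (relations n A)

abbrev B := MvPolynomial (Fin n) A ⧸ ideal n A

variable {n}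

def x (i : Fin n) : B n A := Ideal.Quotient.mk _ (X i)

variable (n) in
abbrev xIdeal : Ideal (B n A) := Ideal.span (Set.range (x A))

variable {A}

theorem x_mul_x_of_ne {i j : Fin n} (h : i ≠ j) : x A i * x A j = 0 := by
  wlog hij : i < j generalizing i j
  · rw [mul_comm]
    exact this h.symm (h.lt_or_gt.resolve_left hij)
  rw [x, x, ← map_mul, Ideal.Quotient.eq_zero_iff_mem]
  exact Ideal.subset_span (Or.inr ⟨i, j, hij, rfl⟩)

theorem x_sq_eq_x_sq (i j : Fin n) : x A i ^ 2 = x A j ^ 2 := by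
  wlog hij : i < j generalizing i j
  · rcases (not_lt.1 hij).lt_or_eq with hji | rfl
    · exact (this j i hji).symm
    · rfl
  rw [x, x, ← map_pow, ← map_pow, Ideal.Quotient.eq]
  exact Ideal.subset_span (Or.inl ⟨i, j, hij, rfl⟩)

theorem x_mul_x (i j k : Fin n) : x A i * x A j = if i = j then x A k ^ 2 else 0 := by
  split_ifs with h
  · rw [h, ← sq, x_sq_eq_x_sq]
  · exact x_mul_x_of_ne h

theorem x_sq_mul_x (hn : 2 ≤ n) (i k : Fin n) : x A i ^ 2 * x A k = 0 := by
  have : Nontrivial (Fin n) := Fin.nontrivial_iff_two_le.2 hn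
  obtain ⟨l, hl⟩ := exists_ne k
  rw [x_sq_eq_x_sq i l, sq, mul_assoc, x_mul_x_of_ne hl, mul_zero]

theorem xIdeal_pow_three (hn : 2 ≤ n) : xIdeal n A ^ 3 = ⊥ := by
  rw [pow_three, Ideal.span_mul_span', Ideal.span_mul_span', Ideal.span_eq_bot]
  rintro _ ⟨_, ⟨i, rfl⟩, _, ⟨_, ⟨j, rfl⟩, _, ⟨k, rfl⟩, rfl⟩, rfl⟩
  dsimp only
  rw [← mul_assoc]
  rcases eq_or_ne i j with rfl | hij
  · rw [← sq, x_sq_mul_x hn]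
  · rw [x_mul_x_of_ne hij, zero_mul]

theorem adjoin_range_x : Algebra.adjoin A (Set.range (x A : Fin n → B n A)) = ⊤ := by
  rw [show Set.range (x A) = Ideal.Quotient.mkₐ A (ideal n A) '' Set.range X from
    Set.range_comp _ _, Algebra.adjoin_image, adjoin_range_X, Algebra.map_top,
    AlgHom.range_eq_top]
  exact Ideal.Quotient.mkₐ_surjective A _

def lift {S : Type*} [CommRing S] [Algebra A S] (f : Fin n → S)
    (hmul : ∀ i j, i ≠ j → f i * f j = 0) (hsq : ∀ i j, f i ^ 2 = f j ^ 2) : B n A →ₐ[A] S :=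
  Ideal.Quotient.liftₐ _ (aeval f) fun p hp => by
    refine (Ideal.span_le (I := RingHom.ker (aeval f : MvPolynomial (Fin n) A →ₐ[A] S))).2
      ?_ hp
    rintro _ (⟨i, j, hij, rfl⟩ | ⟨i, j, hij, rfl⟩) <;> simp [hsq i j, hmul i j hij.ne]

@[simp]
theorem lift_x {S : Type*} [CommRing S] [Algebra A S] (f : Fin n → S)
    (hmul : ∀ i j, i ≠ j → f i * f j = 0) (hsq : ∀ i j, f i ^ 2 = f j ^ 2) (i : Fin n) :
    lift f hmul hsq (x A i) = f i :=
  aeval_X f i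

variable (n A) in
def toDualNumbers : B n A →ₐ[A] TrivSqZeroExt A (Fin n → A) :=
  lift (fun i => .inr (Pi.single i 1)) (fun _ _ _ => TrivSqZeroExt.inr_mul_inr _ _ _)
    (fun _ _ => by simp [sq])

theorem fst_toDualNumbers_mk (p : MvPolynomial (Fin n) A) :
    (toDualNumbers n A (Ideal.Quotient.mk _ p)).fst = constantCoeff p := by
  induction p using MvPolynomial.induction_on with
  | C a =>
    change (toDualNumbers n A (algebraMap A (B n A) a)).fst = _
    simp [TrivSqZeroExt.algebraMap_eq_inl]
  | add p q hp hq => simp [hp, hq]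
  | mul_X p i _ => simp [← x.eq_def, toDualNumbers]

theorem mem_xIdeal_of_fst_toDualNumbers_eq_zero {b : B n A}
    (hb : (toDualNumbers n A b).fst = 0) : b ∈ xIdeal n A := by
  obtain ⟨p, rfl⟩ := Ideal.Quotient.mk_surjective b
  rw [fst_toDualNumbers_mk] at hb
  have hp : p ∈ Ideal.span (Set.range X) := by
    rw [← Set.image_univ, mem_ideal_span_X_image]
    intro m hm
    by_contra! h
    rw [show m = 0 from Finsupp.ext fun i => h i (Set.mem_univ i), mem_support_iff] at hm
    exact hm hb
  convert Ideal.mem_map_of_mem (Ideal.Quotient.mk _) hp using 1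
  rw [Ideal.map_span, ← Set.range_comp]
  rfl

theorem mem_xIdeal_of_sum_smul_D_eq_zero {v : Fin n → B n A}
    (h : ∑ i, v i • KaehlerDifferential.D A (B n A) (x A i) = 0) (i : Fin n) :
    v i ∈ xIdeal n A := by
  let ε := (TrivSqZeroExt.fstHom A A (Fin n → A)).comp (toDualNumbers n A)
  let _ : Module (B n A) (Fin n → A) := Module.compHom _ ε.toRingHom
  have : IsScalarTower A (B n A) (Fin n → A) :=
    ⟨fun a b w => show ε (a • b) • w = a • ε b • w by rw [map_smul, smul_assoc]⟩
  have hsmul : ∀ (b : B n A) (w : Fin n → A), b • w = (toDualNumbers n A b).fst • w :=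
    fun _ _ => rfl
  let d := Derivation.sndOfAlgHom (toDualNumbers n A) hsmul
  have := congrFun (congrArg d.liftKaehlerDifferential h) i
  refine mem_xIdeal_of_fst_toDualNumbers_eq_zero ?_
  simpa [d, Derivation.sndOfAlgHom, hsmul, toDualNumbers, Pi.single_apply] using this

theorem fittingIdeal0_eq_bot (hn : 3 ≤ n) : fittingIdeal0 (B n A) (Ω[B n A⁄A]) = ⊥ := by
  have hspan : Submodule.span (B n A)
      (Set.range fun i => KaehlerDifferential.D A (B n A) (x A i)) = ⊤ := by
    rw [Set.range_comp', ← KaehlerDifferential.span_D_image_eq_top adjoin_range_x]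
  have hle := fittingIdeal0_le_pow hspan fun _ => mem_xIdeal_of_sum_smul_D_eq_zero
  rw [Fintype.card_fin] at hle
  exact eq_bot_iff.2 <| hle.trans <|
    (Ideal.pow_le_pow_right hn).trans (xIdeal_pow_three (by omega)).le

theorem sum_coeff_sq_eq_zero_of_mem {p : MvPolynomial (Fin n) A} (hp : p ∈ ideal n A) :
    ∑ i, coeff (Finsupp.single i 2) p = 0 := by
  suffices ∀ r, ∑ i, coeff (Finsupp.single i 2) (r * p) = 0 by simpa using this 1
  induction hp using Submodule.span_induction with
  | mem g hg =>
    intro r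
    have hhom : g.IsHomogeneous 2 := by
      rcases hg with ⟨i, j, -, rfl⟩ | ⟨i, j, -, rfl⟩
      · exact (isHomogeneous_X_pow i 2).sub (isHomogeneous_X_pow j 2)
      · exact (isHomogeneous_X A i).mul (isHomogeneous_X A j)
    have hcoeff : ∀ i : Fin n, coeff (Finsupp.single i 2) (r * g) =
        constantCoeff r * coeff (Finsupp.single i 2) g :=
      fun i => IsHomogeneous.coeff_mul_left (by rwa [Finsupp.degree_single]) r
    simp_rw [hcoeff, ← Finset.mul_sum]
    rcases hg with ⟨i, j, hij, rfl⟩ | ⟨i, j, hij, rfl⟩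
    · simp [coeff_X_pow, Finsupp.single_eq_single_iff]
    · simp [coeff_single_two_X_mul_X hij.ne]
  | zero => simp
  | add p q _ _ hp hq => intro r; simp [mul_add, Finset.sum_add_distrib, hp r, hq r]
  | smul s p _ hp => intro r; simpa [mul_assoc] using hp (r * s)

theorem natCast_eq_zero_of_nsmul_x_sq_eq_zero {k : ℕ} (i : Fin n) (h : k • x A i ^ 2 = 0) :
    (k : A) = 0 := by
  have hmem : (k • X i ^ 2 : MvPolynomial (Fin n) A) ∈ ideal n A := by
    rwa [← Ideal.Quotient.eq_zero_iff_mem, map_nsmul, map_pow]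
  simpa [-nsmul_eq_mul, coeff_smul, coeff_X_pow, Finsupp.single_eq_single_iff] using
    sum_coeff_sq_eq_zero_of_mem hmem

variable (A) in
def noetherElement (i₀ : Fin n) : B n A ⊗[A] B n A :=
  ∑ i, x A i ⊗ₜ x A i + (x A i₀ ^ 2) ⊗ₜ 1 + 1 ⊗ₜ (x A i₀ ^ 2)

theorem noetherElement_mul_tmul_sub (hn : 2 ≤ n) (i₀ k : Fin n) :
    noetherElement A i₀ * (1 ⊗ₜ x A k - x A k ⊗ₜ 1) = 0 :=
  sum_tmul_add_mul_one_tmul_sub_eq_zero (fun i j => x_mul_x i j i₀) (x_sq_mul_x hn i₀) k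

theorem noetherElement_mem_annihilator (hn : 2 ≤ n) (i₀ : Fin n) :
    noetherElement A i₀ ∈
      (RingHom.ker (Algebra.TensorProduct.lmul' A : B n A ⊗[A] B n A →ₐ[A] B n A)).annihilator :=
  mem_annihilator_ker_lmul'_of_adjoin_eq_top adjoin_range_x <| by
    rintro _ ⟨k, rfl⟩
    exact noetherElement_mul_tmul_sub hn i₀ k

theorem lmul'_noetherElement (i₀ : Fin n) :
    Algebra.TensorProduct.lmul' A (noetherElement A i₀) = (n + 2) • x A i₀ ^ 2 := by
  simp [noetherElement, ← sq, x_sq_eq_x_sq _ i₀]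
  ring

end

end ApolarQuadric

open ApolarQuadric in
/-- Let `n ≥ 3` and, over a commutative ring `A`, let
`B = A[X_1, …, X_n]/I` with `I = ⟨X_i² - X_j² (i < j), X_i X_j (i < j)⟩`.  Then the Kähler
different vanishes: `F₀(Ω[B⁄A]) = 0`.  Consequently, if `A = K` is a field whose
characteristic does not divide `n + 2`, the inclusion `D_K(B/K) ⊆ D_N(B/K)` is strict,
since the nonzero element `(n + 2) x_1²` lies in the Noether different
`D_N(B/K) = μ(Ann J)` but not in `D_K(B/K) = F₀(Ω[B⁄K]) = 0`. -/
theorem kaehler_different_eq_bot_and_strict_inclusion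
    (n : ℕ) (hn : 3 ≤ n) :
    (∀ (A : Type*) [CommRing A],
      letI I : Ideal (MvPolynomial (Fin n) A) := Ideal.span
        ({ p | ∃ i j : Fin n, i < j ∧ p = X i ^ 2 - X j ^ 2 } ∪
          { p | ∃ i j : Fin n, i < j ∧ p = X i * X j })
      fittingIdeal0 (MvPolynomial (Fin n) A ⧸ I)
        (Ω[(MvPolynomial (Fin n) A ⧸ I)⁄A]) = ⊥) ∧
    ∀ (K : Type*) [Field K], ¬ ((ringChar K : ℕ) ∣ n + 2) →
      letI I : Ideal (MvPolynomial (Fin n) K) := Ideal.span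
        ({ p | ∃ i j : Fin n, i < j ∧ p = X i ^ 2 - X j ^ 2 } ∪
          { p | ∃ i j : Fin n, i < j ∧ p = X i * X j })
      letI B := MvPolynomial (Fin n) K ⧸ I
      let x₁ : B := Ideal.Quotient.mk I (X ⟨0, by omega⟩)
      (n + 2) • x₁ ^ 2 ≠ 0 ∧
        (n + 2) • x₁ ^ 2 ∈ Ideal.map (Algebra.TensorProduct.lmul' K : B ⊗[K] B →ₐ[K] B)
          (RingHom.ker (Algebra.TensorProduct.lmul' K : B ⊗[K] B →ₐ[K] B)).annihilator ∧
        fittingIdeal0 B (Ω[B⁄K])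
          < Ideal.map (Algebra.TensorProduct.lmul' K : B ⊗[K] B →ₐ[K] B)
              (RingHom.ker (Algebra.TensorProduct.lmul' K : B ⊗[K] B →ₐ[K] B)).annihilator := by
  refine ⟨fun A _ => fittingIdeal0_eq_bot hn, fun K _ hchar => ?_⟩
  let i₀ : Fin n := ⟨0, by omega⟩
  have hne : (n + 2) • x K i₀ ^ 2 ≠ 0 := fun h =>
    hchar ((ringChar.spec K _).1 (by exact_mod_cast natCast_eq_zero_of_nsmul_x_sq_eq_zero i₀ h))
  have hmem := Ideal.mem_map_of_mem (Algebra.TensorProduct.lmul' K)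
    (noetherElement_mem_annihilator (by omega) i₀)
  rw [lmul'_noetherElement] at hmem
  refine ⟨hne, hmem, (fittingIdeal0_eq_bot hn).trans_lt (bot_lt_iff_ne_bot.2 fun h => hne ?_)⟩
  exact (Submodule.mem_bot _).1 (h ▸ hmem)
end
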